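/- arXiv:2109.14774 — 8 statements merged into one kernel-verified Lean document; each statement's English description precedes it below -/
import Mathlib

section
/- For every n ≥ 1, the identity ∑_{i=1}^{n−1} ∑_{k=1}^{i} f_{k−1} f_k = f_{n−1} f_n − ⌊(n+1)/2⌋ holds. -/
lemma fib_cassini (n : ℕ) :
    (Nat.fib (n + 1) : ℤ) ^ 2 - Nat.fib n * Nat.fib (n + 2) = 1 - 2 * (n % 2 : ℕ) := by
  induction n with
  | zero => simp
  | succ m ih =>
    have h : Nat.fib (m + 1 + 2) = Nat.fib (m + 1) + Nat.fib (m + 2) := Nat.fib_add_two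
    have h' : Nat.fib (m + 2) = Nat.fib m + Nat.fib (m + 1) := Nat.fib_add_two
    rcases Nat.mod_two_eq_zero_or_one m with h2 | h2 <;>
      [ (have e : (m + 1) % 2 = 1 := by omega);
        (have e : (m + 1) % 2 = 0 := by omega)] <;>
      rw [h2, h'] at ih <;> rw [h, h', e] <;> push_cast at ih ⊢ <;>
      linear_combination -ih

lemma fib_prod_sum_aux (n : ℕ) :
    (∑ k ∈ Finset.Icc 1 n, (Nat.fib k : ℤ) * Nat.fib (k + 1))
      = (Nat.fib (n + 1) : ℤ) ^ 2 - ((n + 1) % 2 : ℕ) := by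
  induction n with
  | zero => simp
  | succ m ih =>
    rw [Finset.sum_Icc_succ_top (by omega), ih]
    have hc := fib_cassini m
    have h : Nat.fib (m + 2) = Nat.fib m + Nat.fib (m + 1) := Nat.fib_add_two
    rw [h] at hc
    have h1 : Nat.fib (m + 1 + 1) = Nat.fib m + Nat.fib (m + 1) := Nat.fib_add_two
    rcases Nat.mod_two_eq_zero_or_one m with h2 | h2 <;>
      [ (have e : (m + 1 + 1) % 2 = 0 ∧ (m + 1) % 2 = 1 := by omega);
        (have e : (m + 1 + 1) % 2 = 1 ∧ (m + 1) % 2 = 0 := by omega)] <;>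
      rw [h2] at hc <;> rw [h1, e.1, e.2] <;> push_cast at * <;> linarith

/-- The Fibonacci identity `∑_{i=1}^{n-1} ∑_{k=1}^{i} f_{k-1} f_k = f_{n-1} f_n - ⌊(n+1)/2⌋`
for `n ≥ 1`, where the Fibonacci numbers are indexed so that `f_0 = f_1 = 1`
(so `f_j = Nat.fib (j+1)`). -/
theorem stmt2 (n : ℕ) (hn : 1 ≤ n) :
    (∑ i ∈ Finset.Icc 1 (n - 1), ∑ k ∈ Finset.Icc 1 i, (Nat.fib k : ℤ) * Nat.fib (k + 1))
      = (Nat.fib n : ℤ) * Nat.fib (n + 1) - ((n + 1) / 2 : ℕ) := by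
  induction n with
  | zero => omega
  | succ m ih =>
    rcases Nat.eq_or_lt_of_le hn with h1 | h1
    · simp [← h1]
    · have hm : 1 ≤ m := by omega
      have hms : m + 1 - 1 = (m - 1) + 1 := by omega
      rw [hms, Finset.sum_Icc_succ_top (by omega), Nat.sub_add_cancel hm, ih hm,
        fib_prod_sum_aux m]
      have h : Nat.fib (m + 1 + 1) = Nat.fib m + Nat.fib (m + 1) := Nat.fib_add_two
      have e : (m + 1 + 1) / 2 = (m + 1) / 2 + (m + 1) % 2 := by omega
      rw [h, e]
      push_cast
      ring
end

section
/- For any composition L of n ≥ 1, there exists exactly one permutation π ∈ S_n whose descent composition is L and which satisfies ipk(π) = 0 (i.e., π⁻¹ has no peaks). -/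
/-- The one-line notation of a permutation `π` of `{1,…,n}`, read as a function on 0-based
positions: `permWord π j = π_{j+1}` (values are 1-based; out-of-range positions give `0`). -/
def permWord {n : ℕ} (π : Equiv.Perm (Fin n)) (j : ℕ) : ℕ :=
  if h : j < n then ((π ⟨j, h⟩ : Fin n) : ℕ) + 1 else 0

/-- `π` contains `σ` as a consecutive pattern: some window of consecutive letters of `π`
has standardization `σ`, i.e. is order-isomorphic to the one-line word of `σ`. -/
def ContainsPat {n m : ℕ} (π : Equiv.Perm (Fin n)) (σ : Equiv.Perm (Fin m)) : Prop :=
  ∃ i : ℕ, i + m ≤ n ∧ ∀ j k : Fin m,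
    (permWord π (i + (j : ℕ)) < permWord π (i + (k : ℕ)) ↔ permWord σ j < permWord σ k)

/-- The number of peaks of `π`: 1-based indices `i` with `2 ≤ i ≤ n-1` and
`π_{i-1} < π_i > π_{i+1}`. -/
def pkCount {n : ℕ} (π : Equiv.Perm (Fin n)) : ℕ :=
  ((Finset.Icc 2 (n - 1)).filter fun i =>
    permWord π (i - 2) < permWord π (i - 1) ∧ permWord π i < permWord π (i - 1)).card

/-- The number of left peaks of `π`: 1-based indices `i ∈ [n-1]` that are peaks,
or `i = 1` with `π_1 > π_2`. -/
def lpkCount {n : ℕ} (π : Equiv.Perm (Fin n)) : ℕ :=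
  ((Finset.Icc 1 (n - 1)).filter fun i =>
    (2 ≤ i ∧ permWord π (i - 2) < permWord π (i - 1) ∧ permWord π i < permWord π (i - 1))
      ∨ (i = 1 ∧ permWord π 1 < permWord π 0)).card

/-- The number of peaks of `π⁻¹`. -/
def ipk {n : ℕ} (π : Equiv.Perm (Fin n)) : ℕ := pkCount π⁻¹

/-- The number of left peaks of `π⁻¹`. -/
def ilpk {n : ℕ} (π : Equiv.Perm (Fin n)) : ℕ := lpkCount π⁻¹

/-- The descent set of `π`, as a set of 1-based indices `i ∈ [n-1]` with `π_i > π_{i+1}`. -/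
def descSet {n : ℕ} (π : Equiv.Perm (Fin n)) : Finset ℕ :=
  (Finset.Icc 1 (n - 1)).filter fun i => permWord π i < permWord π (i - 1)

/-- `π` has descent composition `L` iff the descent set of `π` consists exactly of the
partial sums `L_1, L_1 + L_2, …, L_1 + ⋯ + L_{k-1}` of `L` (excluding the total sum `n`). -/
def HasDescComp {n : ℕ} (π : Equiv.Perm (Fin n)) (L : Composition n) : Prop :=
  descSet π = (Finset.range (L.length - 1)).image fun i => L.sizeUpTo (i + 1)

/-!
A permutation has no inverse peaks exactly when `π⁻¹` decreases down to its minimum, which it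
attains at the value `π 0`, and increases afterwards. The values below `π 0` then occupy exactly
the descents of `π`, in decreasing order, and the remaining values occupy the other positions in
increasing order. So such a `π` is determined by its descent set `D`, and conversely filling in
the values this way produces, for every `D ⊆ [1, n - 1]`, a permutation with descent set `D` and
no inverse peaks.
-/

section NoPeak

variable {α : Type*} [LinearOrder α] {f : ℕ → α} {m : ℕ}

theorem strictMonoOn_Ico_of_noPeak (hf : Set.InjOn f (Set.Iio m))
    (hpk : ∀ i, i + 2 < m → ¬(f i < f (i + 1) ∧ f (i + 2) < f (i + 1)))
    {k : ℕ} (hk : k + 1 < m → f k < f (k + 1)) : StrictMonoOn f (Set.Ico k m) := by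
  have ascent (a : ℕ) (hka : k ≤ a) : a + 1 < m → f a < f (a + 1) := by
    induction a, hka using Nat.le_induction with
    | base => exact hk
    | succ a hka ih =>
      intro ha
      have hne : f (a + 2) ≠ f (a + 1) := fun h => by
        have := hf (by simp; omega) (by simp; omega) h
        omega
      exact lt_of_le_of_ne (not_lt.mp fun h => hpk a ha ⟨ih (by omega), h⟩) hne.symm
  exact strictMonoOn_of_lt_add_one Set.ordConnected_Ico fun a _ ha ha' => ascent a ha.1 ha'.2

theorem vShape_of_noPeak (hf : Set.InjOn f (Set.Iio m))
    (hpk : ∀ i, i + 2 < m → ¬(f i < f (i + 1) ∧ f (i + 2) < f (i + 1)))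
    {k : ℕ} (hk : k < m) (hmin : ∀ i < m, f k ≤ f i) :
    StrictAntiOn f (Set.Iic k) ∧ StrictMonoOn f (Set.Ico k m) := by
  have ascent {i : ℕ} (hi : i + 1 < m) (hle : f i ≤ f (i + 1)) : f i < f (i + 1) :=
    lt_of_le_of_ne hle fun h => by
      have := hf (by simp; omega) (by simp; omega) h
      omega
  refine ⟨strictAntiOn_Iic_of_succ_lt fun i hi => ?_,
    strictMonoOn_Ico_of_noPeak hf hpk fun h => ascent h (hmin _ h)⟩
  by_contra hdesc
  have hmono := strictMonoOn_Ico_of_noPeak hf hpk fun h => ascent h (not_lt.mp hdesc)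
  exact (hmono ⟨le_rfl, by omega⟩ ⟨hi.le, hk⟩ hi).not_ge (hmin i (by omega))

end NoPeak

section RanksBy

variable {n : ℕ} {α : Type*} [LinearOrder α]

def RanksBy (π : Equiv.Perm (Fin n)) (f : Fin n → α) : Prop :=
  ∀ p q, π p < π q ↔ f p < f q

theorem ranksBy_sort_inv {f : Fin n → α} (hf : Function.Injective f) :
    RanksBy (Tuple.sort f)⁻¹ f := by
  have hmono : StrictMono (f ∘ Tuple.sort f) :=
    (Tuple.monotone_sort f).strictMono_of_injective (hf.comp (Tuple.sort f).injective)
  intro p q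
  obtain ⟨a, rfl⟩ := (Tuple.sort f).surjective p
  obtain ⟨b, rfl⟩ := (Tuple.sort f).surjective q
  simpa using hmono.lt_iff_lt.symm

theorem RanksBy.inv_eq_sort {π : Equiv.Perm (Fin n)} {f : Fin n → α} (h : RanksBy π f) :
    π⁻¹ = Tuple.sort f := by
  refine Tuple.eq_sort_iff.mpr ⟨fun i j hij => ?_, fun i j hij hf => ?_⟩
  · by_contra hlt
    have := (h _ _).mpr (not_le.mp hlt)
    simp only [Equiv.Perm.coe_inv, Equiv.apply_symm_apply] at this
    exact this.not_ge hij
  · have := (h (π⁻¹ i) (π⁻¹ j)).mp (by simpa using hij)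
    exact absurd hf this.ne

end RanksBy

section PermWord

variable {n : ℕ} (π : Equiv.Perm (Fin n))

theorem permWord_of_lt {i : ℕ} (hi : i < n) : permWord π i = π ⟨i, hi⟩ + 1 := dif_pos hi

theorem permWord_lt_permWord_iff {i j : ℕ} (hi : i < n) (hj : j < n) :
    permWord π i < permWord π j ↔ π ⟨i, hi⟩ < π ⟨j, hj⟩ := by
  rw [permWord_of_lt π hi, permWord_of_lt π hj, add_lt_add_iff_right, Fin.val_fin_lt]

theorem permWord_inv_apply (p : Fin n) : permWord π⁻¹ (π p) = p + 1 := by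
  simp [permWord_of_lt π⁻¹ (π p).isLt]

theorem injOn_permWord : Set.InjOn (permWord π) (Set.Iio n) := fun i hi j hj h => by
  rw [permWord_of_lt π hi, permWord_of_lt π hj, add_left_inj, Fin.val_inj,
    π.injective.eq_iff] at h
  exact Fin.mk.inj h

theorem pkCount_eq_zero_iff : pkCount π = 0 ↔ ∀ i, i + 2 < n →
    ¬(permWord π i < permWord π (i + 1) ∧ permWord π (i + 2) < permWord π (i + 1)) := by
  rw [pkCount, Finset.card_eq_zero, Finset.filter_eq_empty_iff]
  constructor
  · intro h i hi
    simpa using h (x := i + 2) (Finset.mem_Icc.mpr ⟨by omega, by omega⟩)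
  · intro h i hi
    obtain ⟨hi2, hin⟩ := Finset.mem_Icc.mp hi
    obtain ⟨j, rfl⟩ := Nat.exists_eq_add_of_le' hi2
    simpa using h j (by omega)

end PermWord

section Valley

variable {n : ℕ}

/-- Ordering positions by this key lists those in `D` from right to left, then the others from
left to right; `valleyPerm n D` assigns the values `0, 1, …, n - 1` in that order. -/
def valleyKey (D : Finset ℕ) (i : ℕ) : ℤ := if i ∈ D then -(i + 1 : ℤ) else i

theorem valleyKey_injective (D : Finset ℕ) : Function.Injective (valleyKey D) := by
  intro i j h
  unfold valleyKey at h
  split_ifs at h <;> omega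

theorem valleyKey_lt_sub_one_iff (D : Finset ℕ) {i : ℕ} (hi : 1 ≤ i) :
    valleyKey D i < valleyKey D (i - 1) ↔ i ∈ D := by
  unfold valleyKey
  split_ifs <;> grind

theorem valleyKey_lt_of_lt_of_lt (D : Finset ℕ) {a b c : ℕ} (hab : a < b) (hcb : c < b)
    (h : valleyKey D a < valleyKey D b) : valleyKey D c < valleyKey D b := by
  unfold valleyKey at *
  split_ifs at * <;> omega

noncomputable def valleyPerm (n : ℕ) (D : Finset ℕ) : Equiv.Perm (Fin n) :=
  (Tuple.sort fun p : Fin n => valleyKey D p)⁻¹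

theorem ranksBy_valleyPerm (D : Finset ℕ) :
    RanksBy (valleyPerm n D) fun p => valleyKey D p :=
  ranksBy_sort_inv ((valleyKey_injective D).comp Fin.val_injective)

variable {π : Equiv.Perm (Fin n)} {D : Finset ℕ}

theorem RanksBy.descSet_eq (h : RanksBy π fun p => valleyKey D p) :
    descSet π = (Finset.Icc 1 (n - 1)).filter (· ∈ D) := by
  refine Finset.filter_congr fun i hi => ?_
  obtain ⟨hi1, hin⟩ := Finset.mem_Icc.mp hi
  rw [permWord_lt_permWord_iff π (by omega) (by omega), h]
  exact valleyKey_lt_sub_one_iff D hi1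

theorem RanksBy.ipk_eq_zero (h : RanksBy π fun p => valleyKey D p) : ipk π = 0 := by
  refine (pkCount_eq_zero_iff π⁻¹).mpr fun v hv ⟨hab, hcb⟩ => ?_
  rw [permWord_lt_permWord_iff _ (by omega) (by omega)] at hab hcb
  have hkey {x y : Fin n} (hxy : x < y) : valleyKey D (π⁻¹ x) < valleyKey D (π⁻¹ y) := by
    rw [← h]
    simpa using hxy
  have hpeak := valleyKey_lt_of_lt_of_lt D hab hcb (hkey (Fin.mk_lt_mk.mpr (Nat.lt_succ_self v)))
  exact (hkey (Fin.mk_lt_mk.mpr (Nat.lt_succ_self (v + 1)))).not_gt hpeak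

end Valley

section Inverse

variable {n : ℕ} {π : Equiv.Perm (Fin n)}

theorem ranksBy_valleyKey_of_ipk_eq_zero (h : ipk π = 0) :
    RanksBy π fun p =>
      valleyKey ((Finset.Icc 1 (n - 1)).filter fun i => permWord π i < permWord π 0) p := by
  intro p q
  have hn : 0 < n := p.pos
  set k : ℕ := (π ⟨0, hn⟩ : ℕ)
  have hk : permWord π⁻¹ k = 1 := permWord_inv_apply π ⟨0, hn⟩
  obtain ⟨hanti, hmono⟩ :
      StrictAntiOn (permWord π⁻¹) (Set.Iic k) ∧ StrictMonoOn (permWord π⁻¹) (Set.Ico k n) :=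
    vShape_of_noPeak (injOn_permWord π⁻¹) ((pkCount_eq_zero_iff π⁻¹).mp h) (π ⟨0, hn⟩).isLt
      fun i hi => by rw [hk, permWord_of_lt _ hi]; omega
  have hsmall (r : Fin n) :
      ((r : ℕ) ∈ (Finset.Icc 1 (n - 1)).filter fun i => permWord π i < permWord π 0) ↔
        (π r : ℕ) < k := by
    rw [Finset.mem_filter, Finset.mem_Icc, permWord_lt_permWord_iff π r.isLt hn, Fin.lt_def]
    refine ⟨And.right, fun hr => ⟨⟨Nat.one_le_iff_ne_zero.mpr fun h0 => ?_, by omega⟩, hr⟩⟩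
    exact hr.ne (by rw [show r = ⟨0, hn⟩ from Fin.ext h0])
  have hp := permWord_inv_apply π p
  have hq := permWord_inv_apply π q
  simp only [valleyKey, hsmall, Fin.lt_def]
  split_ifs with hpk hqk hqk
  · rw [← hanti.lt_iff_gt hqk.le hpk.le, hp, hq]
    omega
  · omega
  · omega
  · rw [← hmono.lt_iff_lt ⟨not_lt.mp hpk, (π p).isLt⟩ ⟨not_lt.mp hqk, (π q).isLt⟩, hp, hq]
    omega

theorem eq_valleyPerm_of_ipk_eq_zero (h : ipk π = 0) : π = valleyPerm n (descSet π) := by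
  have hrank := ranksBy_valleyKey_of_ipk_eq_zero h
  have hdesc := hrank.descSet_eq
  rw [Finset.filter_mem_eq_inter, Finset.inter_eq_right.mpr (Finset.filter_subset _ _)] at hdesc
  rw [hdesc, valleyPerm, ← hrank.inv_eq_sort, inv_inv]

end Inverse

theorem Composition.image_sizeUpTo_succ_subset {n : ℕ} (L : Composition n) :
    (Finset.range (L.length - 1)).image (fun i => L.sizeUpTo (i + 1)) ⊆ Finset.Icc 1 (n - 1) := by
  intro j hj
  obtain ⟨i, hi, rfl⟩ := Finset.mem_image.mp hj
  have hi : i + 1 < L.length := by rw [Finset.mem_range] at hi; omega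
  have h0 : 0 < L.sizeUpTo 1 := L.sizeUpTo_zero ▸ L.sizeUpTo_strict_mono (by omega)
  have h1 := L.monotone_sizeUpTo (show 1 ≤ i + 1 by omega)
  have h2 : L.sizeUpTo (i + 1) < L.sizeUpTo (i + 2) := L.sizeUpTo_strict_mono hi
  have h3 := L.sizeUpTo_le (i + 2)
  exact Finset.mem_Icc.mpr ⟨by omega, by omega⟩

theorem stmt3_general (n : ℕ) (L : Composition n) :
    ∃! π : Equiv.Perm (Fin n), HasDescComp π L ∧ ipk π = 0 := by
  set D := (Finset.range (L.length - 1)).image fun i => L.sizeUpTo (i + 1)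
  have hvalley := ranksBy_valleyPerm (n := n) D
  refine ⟨valleyPerm n D, ⟨?_, hvalley.ipk_eq_zero⟩, fun π ⟨hπD, hπ⟩ => ?_⟩
  · rw [HasDescComp, hvalley.descSet_eq, Finset.filter_mem_eq_inter,
      Finset.inter_eq_right.mpr L.image_sizeUpTo_succ_subset]
  · rw [eq_valleyPerm_of_ipk_eq_zero hπ, show descSet π = D from hπD]

/-- **Theorem 5 (Troyka–Zhuang).** For any composition `L` of `n ≥ 1`, there is exactly one
permutation in `S_n` with descent composition `L` whose inverse has no peaks. -/
theorem stmt3 (n : ℕ) (hn : 1 ≤ n) (L : Composition n) :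
    ∃! π : Equiv.Perm (Fin n), HasDescComp π L ∧ ipk π = 0 :=
  stmt3_general n L
end

section
/- For any n ≥ 1, there is exactly one reverse-alternating permutation π in S_n with ipk(π) = 0. -/
/-- `π` is reverse-alternating: `π_1 > π_2 < π_3 > π_4 < ⋯`, i.e. for each 1-based
`i ∈ [n-1]`, `π_i > π_{i+1}` if `i` is odd and `π_i < π_{i+1}` if `i` is even. -/
def ReverseAlternating {n : ℕ} (π : Equiv.Perm (Fin n)) : Prop :=
  ∀ i : ℕ, 1 ≤ i → i ≤ n - 1 →
    if i % 2 = 1 then permWord π i < permWord π (i - 1)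
    else permWord π (i - 1) < permWord π i

/-! If `π⁻¹` has no peaks, then as a sequence it decreases down to its minimum, attained at
the value `m = π₁`, and increases afterwards. So two entries of `π` that are both `≥ m` occur in
`π` in increasing order, two entries `≤ m` in decreasing order. Reverse alternation then forces
`π` to alternate between these two branches, and two successive entries of one branch must be
consecutive integers (a value between them would sit on the wrong branch). Hence
`π = (m, m - 1, m + 1, m - 2, m + 2, …)`, and only `m = ⌊n/2⌋ + 1` keeps all entries in
`[1, n]`; conversely this permutation has both properties. -/

open Set

section PeakFree

variable {α : Type*} [LinearOrder α] {f : ℕ → α} {n m : ℕ}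

def PeakFree (f : ℕ → α) (n : ℕ) : Prop :=
  ∀ i, i + 2 < n → ¬(f i < f (i + 1) ∧ f (i + 2) < f (i + 1))

theorem PeakFree.lt_add_one_of_lt_add_one (hf : PeakFree f n) (hinj : InjOn f (Iio n))
    {i j : ℕ} (hi : f i < f (i + 1)) (hij : i ≤ j) (hj : j + 1 < n) : f j < f (j + 1) := by
  induction j, hij using Nat.le_induction with
  | base => exact hi
  | succ j _ ih =>
    have hne : f (j + 1) ≠ f (j + 1 + 1) := fun h => by
      have := hinj (show j + 1 < n by omega) (show j + 1 + 1 < n from hj) h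
      omega
    exact lt_of_le_of_ne (not_lt.1 fun h => hf j hj ⟨ih (by omega), h⟩) hne

theorem PeakFree.strictMonoOn_Ico (hf : PeakFree f n) (hinj : InjOn f (Iio n))
    (hmin : ∀ i < n, f m ≤ f i) : StrictMonoOn f (Ico m n) := by
  refine strictMonoOn_of_lt_add_one ordConnected_Ico fun a _ ha ha' => ?_
  obtain ⟨hma, -⟩ := ha
  obtain ⟨-, han⟩ := ha'
  have hm : f m < f (m + 1) :=
    lt_of_le_of_ne (hmin _ (by omega))
      (hinj.ne (show m < n by omega) (show m + 1 < n by omega) (by omega))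
  exact hf.lt_add_one_of_lt_add_one hinj hm hma han

theorem PeakFree.strictAntiOn_Iic (hf : PeakFree f n) (hinj : InjOn f (Iio n))
    (hmin : ∀ i < n, f m ≤ f i) (hm : m < n) : StrictAntiOn f (Iic m) := by
  refine strictAntiOn_of_add_one_lt ordConnected_Iic fun a _ _ ha' => ?_
  have ha' : a + 1 ≤ m := ha'
  refine lt_of_le_of_ne (not_lt.1 fun h => ?_)
    (hinj.ne (show a + 1 < n by omega) (show a < n by omega) (by omega))
  have := hf.lt_add_one_of_lt_add_one hinj h (j := m - 1) (by omega) (by omega)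
  rw [Nat.sub_add_cancel (by omega)] at this
  exact (hmin (m - 1) (by omega)).not_gt this

end PeakFree

def zigzag (m j : ℕ) : ℕ := if Even j then m + j / 2 else m - 1 - j / 2

namespace Equiv.Perm

section

variable {P : Perm ℕ} {m n : ℕ}

theorem apply_lt_apply_iff_of_strictMonoOn_inv (hR : StrictMonoOn ⇑P⁻¹ (Ico m n)) {i j : ℕ}
    (hi : P i ∈ Ico m n) (hj : P j ∈ Ico m n) : P i < P j ↔ i < j := by
  simpa using (hR.lt_iff_lt hi hj).symm

theorem apply_lt_apply_iff_of_strictAntiOn_inv (hL : StrictAntiOn ⇑P⁻¹ (Iic m)) {i j : ℕ}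
    (hi : P i ≤ m) (hj : P j ≤ m) : P i < P j ↔ j < i := by
  simpa using (hL.lt_iff_gt hj hi).symm

theorem apply_add_one_eq_of_strictMonoOn_inv (hR : StrictMonoOn ⇑P⁻¹ (Ico m n)) {i j : ℕ}
    (hij : i < j) (hi : P i ∈ Ico m n) (hj : P j ∈ Ico m n)
    (hbetween : ∀ k, i < k → k < j → P k < m) : P i + 1 = P j := by
  have hlt := (apply_lt_apply_iff_of_strictMonoOn_inv hR hi hj).2 hij
  by_contra hne
  set k := P⁻¹ (P i + 1)
  have hk : P k = P i + 1 := P.apply_symm_apply _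
  have hkmem : P k ∈ Ico m n := ⟨by have := hi.1; omega, by have := hj.2; omega⟩
  have hik := (apply_lt_apply_iff_of_strictMonoOn_inv hR hi hkmem).1 (by omega)
  have hkj := (apply_lt_apply_iff_of_strictMonoOn_inv hR hkmem hj).1 (by omega)
  have := hbetween k hik hkj
  have := hkmem.1
  omega

theorem apply_add_one_eq_of_strictAntiOn_inv (hL : StrictAntiOn ⇑P⁻¹ (Iic m)) {i j : ℕ}
    (hij : i < j) (hi : P i ≤ m) (hj : P j ≤ m)
    (hbetween : ∀ k, i < k → k < j → m ≤ P k) : P j + 1 = P i := by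
  have hlt := (apply_lt_apply_iff_of_strictAntiOn_inv hL hj hi).2 hij
  by_contra hne
  set k := P⁻¹ (P j + 1)
  have hk : P k = P j + 1 := P.apply_symm_apply _
  have hkm : P k ≤ m := by omega
  have hik := (apply_lt_apply_iff_of_strictAntiOn_inv hL hkm hi).1 (by omega)
  have hkj := (apply_lt_apply_iff_of_strictAntiOn_inv hL hj hkm).1 (by omega)
  have := hbetween k hik hkj
  omega

theorem apply_zero_le_apply_iff_even (hP : ∀ j, P j < n ↔ j < n)
    (hR : StrictMonoOn ⇑P⁻¹ (Ico (P 0) n)) (hL : StrictAntiOn ⇑P⁻¹ (Iic (P 0)))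
    (halt : ∀ j, j + 1 < n → (P (j + 1) < P j ↔ Even j))
    {j : ℕ} (hj : j < n) : P 0 ≤ P j ↔ Even j := by
  induction j with
  | zero => simp
  | succ j ih =>
    have hPj : P j < n := (hP j).2 (by omega)
    have hPj' : P (j + 1) < n := (hP (j + 1)).2 hj
    rcases Nat.even_or_odd j with he | ho
    · have hdesc := (halt j hj).2 he
      have hup := (ih (by omega)).2 he
      have hlow : ¬P 0 ≤ P (j + 1) := fun h => by
        have := (apply_lt_apply_iff_of_strictMonoOn_inv hR ⟨h, hPj'⟩ ⟨hup, hPj⟩).1 hdesc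
        omega
      simp [hlow, Nat.even_add_one, he]
    · have hasc : P j < P (j + 1) := lt_of_le_of_ne
        (not_lt.1 fun h => Nat.not_even_iff_odd.2 ho ((halt j hj).1 h))
        (P.injective.ne (by omega))
      have hlow : P j < P 0 := not_le.1 fun h => Nat.not_even_iff_odd.2 ho ((ih (by omega)).1 h)
      have hup : P 0 ≤ P (j + 1) := not_lt.1 fun h => by
        have := (apply_lt_apply_iff_of_strictAntiOn_inv hL hlow.le h.le).1 hasc
        omega
      simp [hup, ho.add_one]

theorem apply_two_mul_of_strictMonoOn_inv (hP : ∀ j, P j < n ↔ j < n)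
    (hR : StrictMonoOn ⇑P⁻¹ (Ico (P 0) n))
    (hbranch : ∀ j < n, (P 0 ≤ P j ↔ Even j)) {k : ℕ} (hk : 2 * k < n) :
    P (2 * k) = P 0 + k := by
  induction k with
  | zero => simp
  | succ k ih =>
    have hmem : ∀ i, 2 * k ≤ i → i ≤ 2 * (k + 1) → Even i → P i ∈ Ico (P 0) n :=
      fun i _ _ he => ⟨(hbranch i (by omega)).2 he, (hP i).2 (by omega)⟩
    have := apply_add_one_eq_of_strictMonoOn_inv hR (i := 2 * k) (j := 2 * (k + 1)) (by omega)
      (hmem _ le_rfl (by omega) (even_two_mul k)) (hmem _ (by omega) le_rfl (even_two_mul _))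
      fun i hi hi' => not_le.1 fun h => by
        obtain ⟨r, hr⟩ := (hbranch i (by omega)).1 h
        omega
    rw [← this, ih (by omega)]
    ring

theorem apply_two_mul_add_one_of_strictAntiOn_inv (hL : StrictAntiOn ⇑P⁻¹ (Iic (P 0)))
    (hbranch : ∀ j < n, (P 0 ≤ P j ↔ Even j)) {k : ℕ} (hk : 2 * k + 1 < n) :
    P (2 * k + 1) + 1 + k = P 0 := by
  have hodd : ∀ i, i < n → Odd i → P i ≤ P 0 := fun i hi ho =>
    (not_le.1 fun h => Nat.not_even_iff_odd.2 ho ((hbranch i hi).1 h)).le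
  induction k with
  | zero =>
    exact apply_add_one_eq_of_strictAntiOn_inv hL one_pos le_rfl (hodd 1 hk odd_one)
      fun i hi hi' => by omega
  | succ k ih =>
    have := apply_add_one_eq_of_strictAntiOn_inv hL (i := 2 * k + 1) (j := 2 * (k + 1) + 1)
      (by omega) (hodd _ (by omega) (odd_two_mul_add_one k)) (hodd _ hk (odd_two_mul_add_one _))
      fun i hi hi' => (hbranch i (by omega)).2 ⟨k + 1, by omega⟩
    rw [← ih (by omega), ← this]
    ring

theorem apply_eq_zigzag_of_peakFree_inv (hP : ∀ j, P j < n ↔ j < n) (hpk : PeakFree ⇑P⁻¹ n)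
    (halt : ∀ j, j + 1 < n → (P (j + 1) < P j ↔ Even j)) {j : ℕ} (hj : j < n) :
    P j = zigzag (n / 2) j := by
  have hinj : InjOn ⇑P⁻¹ (Iio n) := P⁻¹.injective.injOn
  have hmin : ∀ i < n, P⁻¹ (P 0) ≤ P⁻¹ i := by simp
  have hR := hpk.strictMonoOn_Ico hinj hmin
  have hL := hpk.strictAntiOn_Iic hinj hmin ((hP 0).2 (by omega))
  have hbranch : ∀ i < n, (P 0 ≤ P i ↔ Even i) :=
    fun i hi => apply_zero_le_apply_iff_even hP hR hL halt hi
  have heven : ∀ k, 2 * k < n → P (2 * k) = P 0 + k :=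
    fun k hk => apply_two_mul_of_strictMonoOn_inv hP hR hbranch hk
  have hodd : ∀ k, 2 * k + 1 < n → P (2 * k + 1) + 1 + k = P 0 :=
    fun k hk => apply_two_mul_add_one_of_strictAntiOn_inv hL hbranch hk
  -- the entries at the last even and the last odd position must still lie in `[0, n)`
  have hm : P 0 = n / 2 := by
    have hlast := heven ((n - 1) / 2) (by omega)
    have := (hP (2 * ((n - 1) / 2))).2 (by omega)
    rcases lt_or_ge n 2 with hn | hn
    · have := (hP 0).2 (by omega)
      omega
    · have := hodd (n / 2 - 1) (by omega)
      omega
  rcases Nat.even_or_odd' j with ⟨k, rfl | rfl⟩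
  · simp [zigzag, heven k hj, hm]
  · have := hodd k hj
    simp only [zigzag, Nat.not_even_bit1, ↓reduceIte]
    omega

end

section

variable {n : ℕ} (π : Perm (Fin n))

def extendNat : Perm ℕ := π.extendDomain Fin.equivSubtype

theorem extendNat_apply_of_lt {j : ℕ} (h : j < n) : π.extendNat j = π ⟨j, h⟩ := by
  rw [extendNat, π.extendDomain_apply_subtype Fin.equivSubtype (p := (· < n)) h]
  rfl

theorem extendNat_lt_iff (j : ℕ) : π.extendNat j < n ↔ j < n := by
  by_cases h : j < n
  · simp [π.extendNat_apply_of_lt h, h]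
  · rw [extendNat, π.extendDomain_apply_not_subtype Fin.equivSubtype (p := (· < n)) h]

theorem extendNat_inv : π⁻¹.extendNat = π.extendNat⁻¹ := (extendDomain_inv _ _).symm

end

end Equiv.Perm

def unzigzag (m v : ℕ) : ℕ := if m ≤ v then 2 * (v - m) else 2 * (m - v) - 1

def zigzagPerm (n : ℕ) : Equiv.Perm (Fin n) where
  toFun j := ⟨zigzag (n / 2) j, by
    have := j.2; simp only [zigzag, Nat.even_iff]; split_ifs <;> omega⟩
  invFun v := ⟨unzigzag (n / 2) v, by
    have := v.2; simp only [unzigzag]; split_ifs <;> omega⟩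
  left_inv j := Fin.ext <| by
    have := j.2; simp only [zigzag, unzigzag, Nat.even_iff]; split_ifs <;> omega
  right_inv v := Fin.ext <| by
    have := v.2; simp only [zigzag, unzigzag, Nat.even_iff]; split_ifs <;> omega

theorem permWord_eq_extendNat {n j : ℕ} (π : Equiv.Perm (Fin n)) (h : j < n) :
    permWord π j = π.extendNat j + 1 := by
  rw [permWord, dif_pos h, π.extendNat_apply_of_lt h]

theorem pkCount_eq_zero_iff_s5 {n : ℕ} (π : Equiv.Perm (Fin n)) :
    pkCount π = 0 ↔ PeakFree ⇑π.extendNat n := by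
  rw [pkCount, Finset.card_eq_zero, Finset.filter_eq_empty_iff]
  constructor
  · intro h i hi
    have := @h (i + 2) (Finset.mem_Icc.2 ⟨by omega, by omega⟩)
    simpa [permWord_eq_extendNat π (show i < n by omega),
      permWord_eq_extendNat π (show i + 1 < n by omega), permWord_eq_extendNat π hi] using this
  · intro h i hi
    obtain ⟨hi2, hin⟩ := Finset.mem_Icc.1 hi
    obtain ⟨i, rfl⟩ := Nat.exists_eq_add_of_le' hi2
    have := h i (by omega)
    simpa [permWord_eq_extendNat π (show i < n by omega),
      permWord_eq_extendNat π (show i + 1 < n by omega),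
      permWord_eq_extendNat π (show i + 2 < n by omega)] using this

theorem reverseAlternating_iff {n : ℕ} (π : Equiv.Perm (Fin n)) :
    ReverseAlternating π ↔
      ∀ j, j + 1 < n → (π.extendNat (j + 1) < π.extendNat j ↔ Even j) := by
  have hne : ∀ j, π.extendNat (j + 1) ≠ π.extendNat j := fun j =>
    π.extendNat.injective.ne (by omega)
  constructor
  · intro h j hj
    have hstep := h (j + 1) (by omega) (by omega)
    rw [Nat.add_sub_cancel, permWord_eq_extendNat π hj,
      permWord_eq_extendNat π (show j < n by omega)] at hstep
    have := hne j
    rw [Nat.even_iff]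
    split_ifs at hstep <;> omega
  · intro h i hi hin
    obtain ⟨j, rfl⟩ := Nat.exists_eq_add_of_le' hi
    have hstep := h j (by omega)
    rw [Nat.add_sub_cancel, permWord_eq_extendNat π (show j + 1 < n by omega),
      permWord_eq_extendNat π (show j < n by omega)]
    have := hne j
    rw [Nat.even_iff] at hstep
    split_ifs <;> omega

theorem reverseAlternating_zigzagPerm (n : ℕ) : ReverseAlternating (zigzagPerm n) := by
  rw [reverseAlternating_iff]
  intro j hj
  rw [Equiv.Perm.extendNat_apply_of_lt _ hj, Equiv.Perm.extendNat_apply_of_lt _ (by omega)]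
  simp only [zigzagPerm, Equiv.coe_fn_mk, zigzag, Nat.even_iff]
  split_ifs <;> omega

theorem ipk_zigzagPerm (n : ℕ) : ipk (zigzagPerm n) = 0 := by
  rw [ipk, pkCount_eq_zero_iff_s5]
  intro i hi
  rw [Equiv.Perm.extendNat_apply_of_lt _ hi, Equiv.Perm.extendNat_apply_of_lt _ (by omega),
    Equiv.Perm.extendNat_apply_of_lt _ (by omega)]
  simp only [zigzagPerm, Equiv.Perm.inv_def, Equiv.coe_fn_symm_mk, unzigzag]
  split_ifs <;> omega

theorem eq_zigzagPerm_of_reverseAlternating_of_ipk_eq_zero {n : ℕ} {π : Equiv.Perm (Fin n)}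
    (hra : ReverseAlternating π) (hipk : ipk π = 0) : π = zigzagPerm n := by
  ext j
  have hpk : PeakFree ⇑π.extendNat⁻¹ n := π.extendNat_inv ▸ (pkCount_eq_zero_iff_s5 _).1 hipk
  have := Equiv.Perm.apply_eq_zigzag_of_peakFree_inv π.extendNat_lt_iff hpk
    ((reverseAlternating_iff π).1 hra) j.2
  rwa [π.extendNat_apply_of_lt j.2] at this

theorem stmt5_general (n : ℕ) :
    ∃! π : Equiv.Perm (Fin n), ReverseAlternating π ∧ ipk π = 0 :=
  ⟨zigzagPerm n, ⟨reverseAlternating_zigzagPerm n, ipk_zigzagPerm n⟩,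
    fun _ ⟨hra, hipk⟩ => eq_zigzagPerm_of_reverseAlternating_of_ipk_eq_zero hra hipk⟩

/-- For any `n ≥ 1`, there is exactly one reverse-alternating permutation in `S_n`
whose inverse has no peaks. -/
theorem stmt5 (n : ℕ) (hn : 1 ≤ n) :
    ∃! π : Equiv.Perm (Fin n), ReverseAlternating π ∧ ipk π = 0 :=
  stmt5_general n
end

section
/- For any n ≥ 1 and k ≥ 0, the number of permutations π in S_n with lpk(π) = k and ipk(π) = 0 is equal to the binomial coefficient C(n, 2k). -/
/-! A permutation has no inverse peaks iff each of its entries is a left-to-right maximum or a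
left-to-right minimum. Such a permutation is determined by its descent set `D` (the new minima sit
exactly at the descents), and every `D ⊆ [n-1]` occurs. The left peaks of `π` are the first
elements of the maximal runs of consecutive integers in `D`, and a set `D ⊆ [n-1]` with runs
`[a₁, b₁], …, [a_k, b_k]` corresponds bijectively to the `2k`-subset `{a₁, b₁ + 1, …, a_k, b_k + 1}`
of `[n]`, namely `D ∆ (D + 1)`. -/

open Finset
open scoped symmDiff

namespace Finset

lemma add_one_mem_image_add_one {T : Finset ℕ} {j : ℕ} : j + 1 ∈ T.image (· + 1) ↔ j ∈ T := by
  simp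

-- Shifting by one raises the sum of the elements by `#T`.
lemma eq_empty_of_image_add_one_eq {T : Finset ℕ} (h : T.image (· + 1) = T) : T = ∅ := by
  have hsum := congrArg (fun S => ∑ x ∈ S, x) h
  simp only [sum_image (fun a _ b _ => Nat.add_right_cancel), sum_add_distrib, sum_const,
    smul_eq_mul, mul_one] at hsum
  exact card_eq_zero.mp (by omega)

lemma card_filter_le_add_one (A : Finset ℕ) (j : ℕ) :
    #{a ∈ A | a ≤ j + 1} = #{a ∈ A | a ≤ j} + if j + 1 ∈ A then 1 else 0 := by
  simp only [Nat.le_add_one_iff, filter_or]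
  rw [card_union_of_disjoint (disjoint_filter.mpr fun _ _ h1 h2 => by omega), filter_eq']
  split_ifs <;> simp

def numRuns (T : Finset ℕ) : ℕ := #(T \ T.image (· + 1))

/-- The starts `a` and the successors `b + 1` of the ends of the maximal runs `[a, b]` of `T`. -/
def runBoundary (T : Finset ℕ) : Finset ℕ := T ∆ T.image (· + 1)

lemma zero_mem_runBoundary {T : Finset ℕ} : 0 ∈ runBoundary T ↔ 0 ∈ T := by
  simp [runBoundary, mem_symmDiff]

lemma add_one_mem_runBoundary {T : Finset ℕ} {j : ℕ} :
    j + 1 ∈ runBoundary T ↔ ¬(j + 1 ∈ T ↔ j ∈ T) := by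
  simp only [runBoundary, mem_symmDiff, add_one_mem_image_add_one]
  tauto

lemma card_runBoundary (T : Finset ℕ) : #(runBoundary T) = 2 * numRuns T := by
  have hcard : #(T.image (· + 1)) = #T := card_image_of_injective _ (add_left_injective 1)
  rw [runBoundary, symmDiff_def, sup_eq_union, card_union_of_disjoint disjoint_sdiff_sdiff,
    numRuns, ← card_sdiff_comm hcard.symm]
  ring

lemma runBoundary_symmDiff (T T' : Finset ℕ) :
    runBoundary (T ∆ T') = runBoundary T ∆ runBoundary T' := by
  rw [runBoundary, runBoundary, runBoundary, image_symmDiff _ _ (add_left_injective 1),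
    symmDiff_symmDiff_symmDiff_comm]

lemma runBoundary_injective : Function.Injective runBoundary := by
  intro T T' h
  have h0 : runBoundary (T ∆ T') = ∅ := by rw [runBoundary_symmDiff, h, symmDiff_self]; rfl
  rw [runBoundary, ← bot_eq_empty, symmDiff_eq_bot] at h0
  exact symmDiff_eq_bot.mp (eq_empty_of_image_add_one_eq h0.symm)

lemma runBoundary_subset_Icc {n : ℕ} {T : Finset ℕ} (hT : T ⊆ Icc 1 (n - 1)) :
    runBoundary T ⊆ Icc 1 n := by
  intro x hx
  have := symmDiff_subset_union hx
  simp only [mem_union, mem_image] at this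
  rcases this with hx | ⟨t, ht, rfl⟩
  · have := mem_Icc.mp (hT hx); simp only [mem_Icc]; omega
  · have := mem_Icc.mp (hT ht); simp only [mem_Icc]; omega

lemma exists_runBoundary_eq {n : ℕ} {A : Finset ℕ} (hA : A ⊆ Icc 1 n) (hA_even : Even #A) :
    ∃ T ⊆ Icc 1 (n - 1), runBoundary T = A := by
  have h0A : 0 ∉ A := fun h => by simpa using hA h
  have hc0 : #{a ∈ A | a ≤ 0} = 0 := by simp [h0A]
  -- Prefix parities of `A` invert `runBoundary`.
  set T := {j ∈ range n | Odd #{a ∈ A | a ≤ j}}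
  have hT : ∀ j, j ∈ T ↔ Odd #{a ∈ A | a ≤ j} := by
    intro j
    rw [mem_filter, mem_range, and_iff_right_iff_imp]
    intro hodd
    by_contra! hj
    rw [filter_true_of_mem fun a ha => (mem_Icc.mp (hA ha)).2.trans hj] at hodd
    exact Nat.not_odd_iff_even.mpr hA_even hodd
  refine ⟨T, fun j hj => ?_, ?_⟩
  · have := (hT j).mp hj
    rw [mem_Icc]
    rcases j with _ | j
    · rw [hc0] at this; exact absurd this (by decide)
    · exact ⟨by omega, by have := mem_range.mp (mem_filter.mp hj).1; omega⟩
  · ext (_ | j)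
    · rw [zero_mem_runBoundary, hT, hc0]; simpa using h0A
    · rw [add_one_mem_runBoundary, hT, hT, card_filter_le_add_one]
      split_ifs with h <;> simp only [h, Nat.odd_add_one, add_zero] <;> tauto

lemma card_filter_numRuns_eq_choose (n k : ℕ) :
    #{T ∈ (Icc 1 (n - 1)).powerset | numRuns T = k} = n.choose (2 * k) := by
  rw [show n.choose (2 * k) = #((Icc 1 n).powersetCard (2 * k)) by simp]
  refine card_bij (fun T _ => runBoundary T) (fun T hT => ?_)
    (fun T _ T' _ h => runBoundary_injective h) (fun A hA => ?_)
  · rw [mem_filter, mem_powerset] at hT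
    rw [mem_powersetCard, card_runBoundary, hT.2]
    exact ⟨runBoundary_subset_Icc hT.1, rfl⟩
  · rw [mem_powersetCard] at hA
    obtain ⟨T, hT, rfl⟩ := exists_runBoundary_eq hA.1 (hA.2 ▸ even_two_mul k)
    have := card_runBoundary T
    exact ⟨T, mem_filter.mpr ⟨mem_powerset.mpr hT, by omega⟩, rfl⟩

end Finset

lemma exists_peak_of_lt_of_gt {α : Type*} [LinearOrder α] {g : ℕ → α} {u v w : ℕ}
    (hg : Set.InjOn g (Set.Icc u w)) (huv : u < v) (hvw : v < w) (hu : g u < g v)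
    (hw : g w < g v) : ∃ m, u ≤ m ∧ m + 2 ≤ w ∧ g m < g (m + 1) ∧ g (m + 2) < g (m + 1) := by
  obtain ⟨p, hp, hmax⟩ := (Icc u w).exists_max_image g ⟨u, mem_Icc.mpr ⟨le_rfl, by omega⟩⟩
  have hvp := hmax v (mem_Icc.mpr ⟨huv.le, hvw.le⟩)
  have hup : u < p := lt_of_le_of_ne (mem_Icc.mp hp).1 (by rintro rfl; exact hu.not_ge hvp)
  have hpw : p < w := lt_of_le_of_ne (mem_Icc.mp hp).2 (by rintro rfl; exact hw.not_ge hvp)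
  have hlt : ∀ q ∈ Icc u w, q ≠ p → g q < g p := fun q hq hqp =>
    lt_of_le_of_ne (hmax q hq) fun h =>
      hqp (hg (Set.mem_Icc.mpr (mem_Icc.mp hq)) (Set.mem_Icc.mpr (mem_Icc.mp hp)) h)
  refine ⟨p - 1, by omega, by omega, ?_, ?_⟩ <;> rw [show p - 1 + 1 = p by omega]
  · exact hlt _ (mem_Icc.mpr ⟨by omega, by omega⟩) (by omega)
  · exact hlt _ (mem_Icc.mpr ⟨by omega, by omega⟩) (by omega)

/-- The `j`-th entry (`0`-based) of the left-to-right extremal permutation with descent set `T`: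
it lies below all earlier entries iff `j ∈ T`, and above a later entry at position `t` iff
`t ∈ T`. -/
def valOfDescents (T : Finset ℕ) (j : ℕ) : ℕ :=
  (if j ∈ T then 0 else j) + #{t ∈ T | j < t}

section valOfDescents

variable {T : Finset ℕ} {i j : ℕ}

lemma valOfDescents_lt_of_mem (hij : i < j) (hj : j ∈ T) :
    valOfDescents T j < valOfDescents T i := by
  have : #{t ∈ T | j < t} < #{t ∈ T | i < t} := by
    refine card_lt_card ((ssubset_iff_of_subset fun t ht => ?_).mpr ⟨j, ?_, ?_⟩)
    · exact mem_filter.mpr ⟨(mem_filter.mp ht).1, hij.trans (mem_filter.mp ht).2⟩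
    · simp [hj, hij]
    · simp
  simp only [valOfDescents, if_pos hj]
  split_ifs <;> omega

lemma valOfDescents_lt_of_notMem (hij : i < j) (hj : j ∉ T) :
    valOfDescents T i < valOfDescents T j := by
  have : #{t ∈ T | i < t} ≤ #{t ∈ T | j < t} + (j - i - 1) :=
    calc #{t ∈ T | i < t} ≤ #({t ∈ T | j < t} ∪ Ioo i j) := card_le_card fun t ht => by
          simp only [mem_filter, mem_union, mem_Ioo] at ht ⊢
          by_cases hjt : j < t
          · exact Or.inl ⟨ht.1, hjt⟩
          · exact Or.inr ⟨ht.2, lt_of_le_of_ne (not_lt.mp hjt) fun h => hj (h ▸ ht.1)⟩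
      _ ≤ _ := (card_union_le _ _).trans_eq (by rw [Nat.card_Ioo])
  simp only [valOfDescents, if_neg hj]
  split_ifs <;> omega

lemma valOfDescents_injective (T : Finset ℕ) : Function.Injective (valOfDescents T) := by
  refine Function.Injective.of_lt_imp_ne fun i j hij => ?_
  by_cases hj : j ∈ T
  · exact (valOfDescents_lt_of_mem hij hj).ne'
  · exact (valOfDescents_lt_of_notMem hij hj).ne

lemma valOfDescents_lt {n : ℕ} (hT : ∀ t ∈ T, t < n) (hj : j < n) : valOfDescents T j < n := by
  have : #{t ∈ T | j < t} ≤ n - j - 1 :=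
    calc #{t ∈ T | j < t} ≤ #(Ioo j n) := card_le_card fun t ht => by
          simp only [mem_filter, mem_Ioo] at ht ⊢
          exact ⟨ht.2, hT t ht.1⟩
      _ = n - j - 1 := Nat.card_Ioo j n
  simp only [valOfDescents]
  split_ifs <;> omega

end valOfDescents

namespace Equiv.Perm

variable {n : ℕ}

lemma permWord_of_lt (π : Perm (Fin n)) {j : ℕ} (hj : j < n) :
    permWord π j = π ⟨j, hj⟩ + 1 := by
  simp [permWord, hj]

lemma permWord_val (π : Perm (Fin n)) (i : Fin n) : permWord π i = π i + 1 :=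
  permWord_of_lt π i.2

lemma permWord_inv_apply (π : Perm (Fin n)) (i : Fin n) : permWord π⁻¹ (π i) = i + 1 := by
  simp [permWord_val]

lemma permWord_injOn (π : Perm (Fin n)) : Set.InjOn (permWord π) (Set.Iio n) := by
  intro a ha b hb h
  rw [permWord_of_lt π ha, permWord_of_lt π hb, Nat.add_right_cancel_iff] at h
  exact congrArg Fin.val (π.injective (Fin.ext h))

/-- `j ∈ descents π` iff `π_j > π_{j+1}` in the paper's 1-based notation. -/
def descents (π : Perm (Fin n)) : Finset ℕ :=
  {j ∈ Icc 1 (n - 1) | permWord π j < permWord π (j - 1)}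

lemma mem_descents {π : Perm (Fin n)} {j : ℕ} :
    j ∈ descents π ↔ 0 < j ∧ j < n ∧ permWord π j < permWord π (j - 1) := by
  simp only [descents, mem_filter, mem_Icc]
  omega

lemma val_mem_descents_iff (π : Perm (Fin n)) {j : Fin n} (hj : 0 < (j : ℕ)) :
    (j : ℕ) ∈ descents π ↔ π j < π ⟨j - 1, by omega⟩ := by
  rw [mem_descents, permWord_val, permWord_of_lt π (by omega : (j : ℕ) - 1 < n)]
  simp only [hj, j.2, true_and, Nat.add_lt_add_iff_right, Fin.lt_def]

/-- Every entry of `π` is a left-to-right maximum or a left-to-right minimum. -/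
def IsLRExtremal (π : Perm (Fin n)) : Prop :=
  ∀ ⦃i i' j : Fin n⦄, i < j → i' < j → π i < π j → π i' < π j

lemma ipk_eq_zero_iff_isLRExtremal (π : Perm (Fin n)) : ipk π = 0 ↔ IsLRExtremal π := by
  rw [ipk, pkCount, card_eq_zero, filter_eq_empty_iff]
  constructor
  · intro hpk i i' j hij hi'j hi
    by_contra! hi'
    have hji' : π j < π i' := lt_of_le_of_ne hi' (π.injective.ne hi'j.ne')
    obtain ⟨m, -, hmw, hm1, hm2⟩ := exists_peak_of_lt_of_gt
      ((permWord_injOn π⁻¹).mono fun x hx => lt_of_le_of_lt hx.2 (π i').2) hi hji'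
      (by simpa [permWord_inv_apply] using hij) (by simpa [permWord_inv_apply] using hi'j)
    have hm : m + 2 ∈ Icc 2 (n - 1) := mem_Icc.mpr ⟨by omega, by have := (π i').2; omega⟩
    exact hpk hm (by simpa using ⟨hm1, hm2⟩)
  · rintro hπ i hi ⟨hi2, hi1⟩
    obtain ⟨h2, hn⟩ := mem_Icc.mp hi
    rw [permWord_of_lt _ (by omega : i - 2 < n), permWord_of_lt _ (by omega : i - 1 < n),
      Nat.add_lt_add_iff_right, ← Fin.lt_def] at hi2
    rw [permWord_of_lt _ (by omega : i < n), permWord_of_lt _ (by omega : i - 1 < n),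
      Nat.add_lt_add_iff_right, ← Fin.lt_def] at hi1
    have := hπ hi2 hi1 (by simp only [coe_inv, Equiv.apply_symm_apply, Fin.lt_def]; omega)
    simp only [coe_inv, Equiv.apply_symm_apply, Fin.lt_def] at this
    omega

namespace IsLRExtremal

variable {π : Perm (Fin n)} (hπ : IsLRExtremal π)
include hπ

lemma apply_lt_apply_iff_of_lt {i j : Fin n} (hij : i < j) :
    π i < π j ↔ (j : ℕ) ∉ descents π := by
  have hj : 0 < (j : ℕ) := by rw [Fin.lt_def] at hij; omega
  have hpj : (⟨j - 1, by omega⟩ : Fin n) < j := by rw [Fin.lt_def]; dsimp only; omega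
  rw [val_mem_descents_iff π hj, not_lt]
  exact ⟨fun h => (hπ hij hpj h).le,
    fun h => hπ hpj hij (lt_of_le_of_ne h (π.injective.ne hpj.ne))⟩

lemma apply_lt_apply_iff {i j : Fin n} :
    π i < π j ↔ i < j ∧ (j : ℕ) ∉ descents π ∨ j < i ∧ (i : ℕ) ∈ descents π := by
  rcases lt_trichotomy i j with hij | rfl | hji
  · simp [hij, hij.not_gt, hπ.apply_lt_apply_iff_of_lt hij]
  · simp
  · rw [← not_le, (π.injective.ne hji.ne).le_iff_lt, hπ.apply_lt_apply_iff_of_lt hji]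
    simp [hji, hji.not_gt]

lemma eq_of_descents_eq {σ : Perm (Fin n)} (hσ : IsLRExtremal σ)
    (h : descents π = descents σ) : π = σ := by
  have hmono : StrictMono (σ * π⁻¹) := fun a b hab => by
    rw [← π.apply_symm_apply a, ← π.apply_symm_apply b, hπ.apply_lt_apply_iff, h,
      ← hσ.apply_lt_apply_iff] at hab
    exact hab
  ext i
  simpa using congrArg Fin.val (congrFun hmono.eq_id (π i)).symm

end IsLRExtremal

noncomputable def ofDescents (T : Finset ℕ) (hT : T ⊆ Icc 1 (n - 1)) : Perm (Fin n) :=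
  have hT' : ∀ t ∈ T, t < n := fun t ht => by have := mem_Icc.mp (hT ht); omega
  Equiv.ofBijective (fun j => ⟨valOfDescents T j, valOfDescents_lt hT' j.2⟩)
    (Finite.injective_iff_bijective.mp fun i j h =>
      Fin.ext (valOfDescents_injective T (congrArg Fin.val h)))

variable {T : Finset ℕ}

lemma ofDescents_apply (hT : T ⊆ Icc 1 (n - 1)) (j : Fin n) :
    (ofDescents T hT j : ℕ) = valOfDescents T j :=
  rfl

lemma isLRExtremal_ofDescents (hT : T ⊆ Icc 1 (n - 1)) : IsLRExtremal (ofDescents T hT) := by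
  intro i i' j hij hi'j h
  rw [Fin.lt_def, ofDescents_apply, ofDescents_apply] at h ⊢
  by_cases hj : (j : ℕ) ∈ T
  · exact absurd h (valOfDescents_lt_of_mem hij hj).not_gt
  · exact valOfDescents_lt_of_notMem hi'j hj

lemma descents_ofDescents (hT : T ⊆ Icc 1 (n - 1)) : descents (ofDescents T hT) = T := by
  ext j
  rw [mem_descents]
  constructor
  · rintro ⟨hj0, hjn, hlt⟩
    rw [permWord_of_lt _ hjn, permWord_of_lt _ (by omega : j - 1 < n), Nat.add_lt_add_iff_right,
      ofDescents_apply, ofDescents_apply, Fin.val_mk, Fin.val_mk] at hlt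
    by_contra hj
    exact hlt.not_gt (valOfDescents_lt_of_notMem (by omega) hj)
  · intro hj
    have := mem_Icc.mp (hT hj)
    refine ⟨by omega, by omega, ?_⟩
    rw [permWord_of_lt _ (by omega : j < n), permWord_of_lt _ (by omega : j - 1 < n),
      Nat.add_lt_add_iff_right, ofDescents_apply, ofDescents_apply, Fin.val_mk, Fin.val_mk]
    exact valOfDescents_lt_of_mem (by omega) hj

lemma lpkCount_eq_numRuns_descents (π : Perm (Fin n)) : lpkCount π = numRuns (descents π) := by
  rw [lpkCount, numRuns]
  congr 1
  ext (_ | _ | m)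
  · simp [mem_descents]
  · simp only [mem_filter, mem_Icc, mem_sdiff, add_one_mem_image_add_one, mem_descents, zero_add,
      Nat.sub_self]
    grind
  · have hne : m + 1 < n → permWord π m ≠ permWord π (m + 1) := fun h =>
      (permWord_injOn π).ne (Set.mem_Iio.mpr (by omega)) (Set.mem_Iio.mpr h) (by omega)
    simp only [mem_filter, mem_Icc, mem_sdiff, add_one_mem_image_add_one, mem_descents,
      Nat.add_sub_cancel, show m + 1 + 1 - 2 = m by omega]
    grind

lemma card_filter_lpkCount_ipk (n k : ℕ) :
    #{π : Perm (Fin n) | lpkCount π = k ∧ ipk π = 0} =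
      #{T ∈ (Icc 1 (n - 1)).powerset | numRuns T = k} := by
  refine card_bij (fun π _ => descents π) (fun π hπ => ?_) (fun π hπ σ hσ h => ?_)
    (fun T hT => ?_)
  · rw [mem_filter, ← lpkCount_eq_numRuns_descents, (mem_filter.mp hπ).2.1, mem_powerset]
    exact ⟨filter_subset _ _, rfl⟩
  · rw [mem_filter, ipk_eq_zero_iff_isLRExtremal] at hπ hσ
    exact hπ.2.2.eq_of_descents_eq hσ.2.2 h
  · rw [mem_filter, mem_powerset] at hT
    have hipk := (ipk_eq_zero_iff_isLRExtremal _).mpr (isLRExtremal_ofDescents hT.1)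
    refine ⟨ofDescents T hT.1, mem_filter.mpr ⟨mem_univ _, ?_, hipk⟩, descents_ofDescents hT.1⟩
    rw [lpkCount_eq_numRuns_descents, descents_ofDescents, hT.2]

end Equiv.Perm

theorem stmt8_general (n k : ℕ) :
    Nat.card {π : Equiv.Perm (Fin n) // lpkCount π = k ∧ ipk π = 0}
      = Nat.choose n (2 * k) := by
  rw [Nat.card_eq_fintype_card, Fintype.card_subtype, Equiv.Perm.card_filter_lpkCount_ipk,
    card_filter_numRuns_eq_choose]

/-- For any `n ≥ 1` and `k ≥ 0`, the number of permutations `π ∈ S_n` with `lpk(π) = k`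
whose inverse has no peaks is the binomial coefficient `C(n, 2k)`. -/
theorem stmt8 (n k : ℕ) (hn : 1 ≤ n) :
    Nat.card {π : Equiv.Perm (Fin n) // lpkCount π = k ∧ ipk π = 0}
      = Nat.choose n (2 * k) :=
  stmt8_general n k
end

section
/- Let n ≥ 1 and let w be a word of length n over the alphabet {a,b,c}. Then w ∈ W_n if and only if w matches the regular expression a* c (c ∪ bc ∪ a⁺b ∪ a⁺c)* a⁺ c*. -/
/-- The three-letter alphabet `{a, b, c}`. -/
inductive ABC : Type
  | a : ABC
  | b : ABC
  | c : ABC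
  deriving DecidableEq, Repr

open ABC

/-- Words matching one of the alternatives `c`, `bc`, `a⁺b`, `a⁺c` of the regular
expression `(c ∪ bc ∪ a⁺b ∪ a⁺c)`. -/
def Atom (u : List ABC) : Prop :=
  u = [c] ∨ u = [b, c] ∨
    ∃ i : ℕ, 1 ≤ i ∧ (u = List.replicate i a ++ [b] ∨ u = List.replicate i a ++ [c])

/-- Membership in `W_n`: words of length `n` of the form `a^i c u a c^j` (with `i, j ≥ 0`)
avoiding the subwords (i.e. blocks of consecutive letters) `bba`, `bbb`, `cba`, `cbb`. -/
def Wmem (n : ℕ) (w : List ABC) : Prop :=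
  w.length = n ∧
  (∃ (i j : ℕ) (u : List ABC),
      w = List.replicate i a ++ [c] ++ u ++ [a] ++ List.replicate j c) ∧
  ¬ [b, b, a] <:+: w ∧ ¬ [b, b, b] <:+: w ∧ ¬ [c, b, a] <:+: w ∧ ¬ [c, b, b] <:+: w

/-! ### Auxiliary definitions -/

/-- `w` avoids the four forbidden factors. -/
def Avoids (v : List ABC) : Prop :=
  ¬ [b, b, a] <:+: v ∧ ¬ [b, b, b] <:+: v ∧ ¬ [c, b, a] <:+: v ∧ ¬ [c, b, b] <:+: v

/-- Invariant: avoids patterns, and if it starts with `b` the next letter must be `c`. -/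
def Good (v : List ABC) : Prop :=
  Avoids v ∧ ∀ y t, v = b :: y :: t → y = c

/-- `v` ends with `a c^q`. -/
def EndA (v : List ABC) : Prop := ∃ u q, v = u ++ [a] ++ List.replicate q c

/-- `v` matches `(c ∪ bc ∪ a⁺b ∪ a⁺c)* a⁺ c*`. -/
def PP (v : List ABC) : Prop :=
  ∃ (p q : ℕ) (L : List (List ABC)), (∀ u ∈ L, Atom u) ∧ 1 ≤ p ∧
    v = L.flatten ++ List.replicate p a ++ List.replicate q c

lemma triple_prefix {α β γ x : ABC} {v : List ABC} (h : [α, β, γ] <+: x :: v) :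
    x = α ∧ ∃ t, v = β :: γ :: t := by
  obtain ⟨t, ht⟩ := h
  simp only [List.cons_append, List.nil_append, List.cons.injEq] at ht
  exact ⟨ht.1.symm, t, ht.2.symm⟩

lemma avoids_cons {x : ABC} {v : List ABC} (h : Avoids v)
    (hx : (x = b ∨ x = c) → ∀ y t, v = b :: y :: t → y = c) : Avoids (x :: v) := by
  obtain ⟨h1, h2, h3, h4⟩ := h
  refine ⟨?_, ?_, ?_, ?_⟩ <;> rw [List.infix_cons_iff] <;> rintro (hp | hi)
  · obtain ⟨hxα, t, hv⟩ := triple_prefix hp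
    exact absurd (hx (Or.inl hxα) _ _ hv) (by simp)
  · exact h1 hi
  · obtain ⟨hxα, t, hv⟩ := triple_prefix hp
    exact absurd (hx (Or.inl hxα) _ _ hv) (by simp)
  · exact h2 hi
  · obtain ⟨hxα, t, hv⟩ := triple_prefix hp
    exact absurd (hx (Or.inr hxα) _ _ hv) (by simp)
  · exact h3 hi
  · obtain ⟨hxα, t, hv⟩ := triple_prefix hp
    exact absurd (hx (Or.inr hxα) _ _ hv) (by simp)
  · exact h4 hi

lemma avoids_cons_a {v : List ABC} (h : Avoids v) : Avoids (a :: v) :=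
  avoids_cons h (fun hx => absurd hx (by simp))

lemma good_a {v : List ABC} (h : Avoids v) : Good (a :: v) :=
  ⟨avoids_cons_a h, by intro y t ht; simp at ht⟩

lemma good_c {v : List ABC} (h : Good v) : Good (c :: v) :=
  ⟨avoids_cons h.1 (fun _ => h.2), by intro y t ht; simp at ht⟩

lemma avoids_b {v : List ABC} (h : Good v) : Avoids (b :: v) :=
  avoids_cons h.1 (fun _ => h.2)

lemma good_bc {v : List ABC} (h : Good v) : Good (b :: c :: v) := by
  have h1 := good_c h
  constructor
  · apply avoids_cons h1.1
    intro _ y t ht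
    simp at ht
  · intro y t ht
    injection ht with _ ht2
    injection ht2 with h2 _
    exact h2.symm

lemma avoids_of_notMem {v : List ABC} (h : b ∉ v) : Avoids v := by
  refine ⟨?_, ?_, ?_, ?_⟩ <;> intro hi <;> exact h (hi.sublist.subset (by simp))

lemma avoids_rep_a (i : ℕ) {v : List ABC} (h : Avoids v) :
    Avoids (List.replicate i a ++ v) := by
  induction i with
  | zero => simpa
  | succ k ih => rw [List.replicate_succ, List.cons_append]; exact avoids_cons_a ih

lemma good_rep_a {i : ℕ} (hi : 1 ≤ i) {v : List ABC} (h : Avoids v) :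
    Good (List.replicate i a ++ v) := by
  obtain ⟨k, rfl⟩ : ∃ k, i = k + 1 := ⟨i - 1, by omega⟩
  rw [List.replicate_succ, List.cons_append]
  exact good_a (avoids_rep_a k h)

lemma good_atom {u v : List ABC} (hu : Atom u) (h : Good v) : Good (u ++ v) := by
  rcases hu with rfl | rfl | ⟨i, hi, rfl | rfl⟩
  · exact good_c h
  · exact good_bc h
  · rw [List.append_assoc]; exact good_rep_a hi (avoids_b h)
  · rw [List.append_assoc]; exact good_rep_a hi (good_c h).1

lemma good_base (p q : ℕ) (hp : 1 ≤ p) :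
    Good (List.replicate p a ++ List.replicate q c) := by
  apply good_rep_a hp
  apply avoids_of_notMem
  simp [List.mem_replicate]

lemma good_flatten (L : List (List ABC)) (hL : ∀ u ∈ L, Atom u) (p q : ℕ) (hp : 1 ≤ p) :
    Good (L.flatten ++ (List.replicate p a ++ List.replicate q c)) := by
  induction L with
  | nil => simpa using good_base p q hp
  | cons u L ih =>
    rw [List.flatten_cons, List.append_assoc]
    exact good_atom (hL u (by simp)) (ih (fun x hx => hL x (by simp [hx])))

lemma avoids_tail {x : ABC} {v : List ABC} (h : Avoids (x :: v)) : Avoids v :=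
  ⟨fun hi => h.1 (List.infix_cons hi), fun hi => h.2.1 (List.infix_cons hi),
   fun hi => h.2.2.1 (List.infix_cons hi), fun hi => h.2.2.2 (List.infix_cons hi)⟩

lemma endA_cases {x : ABC} {v : List ABC} (h : EndA (x :: v)) :
    (x = a ∧ ∃ q, v = List.replicate q c) ∨ (v ≠ [] ∧ EndA v) := by
  obtain ⟨u, q, hu⟩ := h
  cases u with
  | nil =>
    simp only [List.nil_append, List.cons_append, List.cons.injEq] at hu
    exact Or.inl ⟨hu.1, q, hu.2⟩
  | cons y u' =>
    right
    have h2 : v = u' ++ [a] ++ List.replicate q c := by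
      simp only [List.cons_append, List.cons.injEq] at hu
      exact hu.2
    exact ⟨by simp [h2], u', q, h2⟩

lemma PP_atom {u v : List ABC} (hu : Atom u) (h : PP v) : PP (u ++ v) := by
  obtain ⟨p, q, L, hL, hp, rfl⟩ := h
  refine ⟨p, q, u :: L, ?_, hp, by simp⟩
  intro x hx
  rcases List.mem_cons.1 hx with rfl | hx
  · exact hu
  · exact hL x hx

lemma PP_a {v : List ABC} (h : PP v) : PP (a :: v) := by
  obtain ⟨p, q, L, hL, hp, rfl⟩ := h
  cases L with
  | nil => exact ⟨p + 1, q, [], by simp, by omega, by simp [List.replicate_succ]⟩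
  | cons u L' =>
    have hu := hL u (by simp)
    have hmem : ∀ x ∈ L', Atom x := fun x hx => hL x (by simp [hx])
    rcases hu with rfl | rfl | ⟨i, hi, rfl | rfl⟩
    · refine ⟨p, q, (List.replicate 1 a ++ [c]) :: L', ?_, hp, by simp⟩
      intro x hx
      rcases List.mem_cons.1 hx with rfl | hx
      · exact Or.inr (Or.inr ⟨1, le_refl 1, Or.inr rfl⟩)
      · exact hmem x hx
    · refine ⟨p, q, (List.replicate 1 a ++ [b]) :: [c] :: L', ?_, hp, by simp⟩
      intro x hx
      rcases List.mem_cons.1 hx with rfl | hx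
      · exact Or.inr (Or.inr ⟨1, le_refl 1, Or.inl rfl⟩)
      · rcases List.mem_cons.1 hx with rfl | hx
        · exact Or.inl rfl
        · exact hmem x hx
    · refine ⟨p, q, (List.replicate (i + 1) a ++ [b]) :: L', ?_, hp,
        by simp [List.replicate_succ]⟩
      intro x hx
      rcases List.mem_cons.1 hx with rfl | hx
      · exact Or.inr (Or.inr ⟨i + 1, by omega, Or.inl rfl⟩)
      · exact hmem x hx
    · refine ⟨p, q, (List.replicate (i + 1) a ++ [c]) :: L', ?_, hp,
        by simp [List.replicate_succ]⟩
      intro x hx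
      rcases List.mem_cons.1 hx with rfl | hx
      · exact Or.inr (Or.inr ⟨i + 1, by omega, Or.inr rfl⟩)
      · exact hmem x hx

lemma main_lemma : ∀ (n : ℕ) (v : List ABC), v.length ≤ n → Good v → EndA v → PP v := by
  intro n
  induction n with
  | zero =>
    intro v hl _ he
    have hv : v = [] := List.length_eq_zero_iff.1 (Nat.le_zero.1 hl)
    subst hv
    obtain ⟨u, q, hu⟩ := he
    have := congrArg List.length hu
    simp at this
  | succ n ih =>
    intro v hl hg he
    cases v with
    | nil =>
      obtain ⟨u, q, hu⟩ := he
      have := congrArg List.length hu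
      simp at this
    | cons x v' =>
      rcases endA_cases he with ⟨rfl, q, rfl⟩ | ⟨hne, he'⟩
      · exact ⟨1, q, [], by simp, le_refl 1, by simp [List.replicate_succ]⟩
      · have hl' : v'.length ≤ n := by simp at hl; omega
        cases x with
        | c =>
          have hA' : Avoids v' := avoids_tail hg.1
          have hst : ∀ y t, v' = b :: y :: t → y = c := by
            intro y t hv'
            cases y with
            | a => exact absurd (⟨[], t, by simp [hv']⟩ : [c, b, a] <:+: c :: v') hg.1.2.2.1
            | b => exact absurd (⟨[], t, by simp [hv']⟩ : [c, b, b] <:+: c :: v') hg.1.2.2.2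
            | c => rfl
          exact PP_atom (Or.inl rfl) (ih v' hl' ⟨hA', hst⟩ he')
        | b =>
          obtain ⟨y, t, rfl⟩ : ∃ y t, v' = y :: t := by
            cases v' with
            | nil => exact absurd rfl hne
            | cons y t => exact ⟨y, t, rfl⟩
          have hy : y = c := hg.2 y t rfl
          subst hy
          rcases endA_cases he' with ⟨h, _⟩ | ⟨hne2, he2⟩
          · exact absurd h (by simp)
          · have hA2 : Avoids t := avoids_tail (avoids_tail hg.1)
            have hst2 : ∀ y s, t = b :: y :: s → y = c := by
              intro y s ht
              cases y with
              | a => exact absurd (⟨[b], s, by simp [ht]⟩ : [c, b, a] <:+: b :: c :: t) hg.1.2.2.1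
              | b => exact absurd (⟨[b], s, by simp [ht]⟩ : [c, b, b] <:+: b :: c :: t) hg.1.2.2.2
              | c => rfl
            have hl2 : t.length ≤ n := by simp at hl; omega
            exact PP_atom (Or.inr (Or.inl rfl)) (ih t hl2 ⟨hA2, hst2⟩ he2)
        | a =>
          cases v' with
          | nil => exact absurd rfl hne
          | cons z v'' =>
            cases z with
            | a =>
              have hst : ∀ y t, a :: v'' = b :: y :: t → y = c := by
                intro y t h
                simp at h
              exact PP_a (ih (a :: v'') hl' ⟨avoids_tail hg.1, hst⟩ he')
            | c =>
              have hst : ∀ y t, c :: v'' = b :: y :: t → y = c := by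
                intro y t h
                simp at h
              exact PP_a (ih (c :: v'') hl' ⟨avoids_tail hg.1, hst⟩ he')
            | b =>
              rcases endA_cases he' with ⟨h, _⟩ | ⟨hne2, he2⟩
              · exact absurd h (by simp)
              · have hA2 : Avoids v'' := avoids_tail (avoids_tail hg.1)
                have hst2 : ∀ y s, v'' = b :: y :: s → y = c := by
                  intro y s h2
                  cases y with
                  | a => exact absurd (⟨[a], s, by simp [h2]⟩ : [b, b, a] <:+: a :: b :: v'') hg.1.1
                  | b => exact absurd (⟨[a], s, by simp [h2]⟩ : [b, b, b] <:+: a :: b :: v'') hg.1.2.1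
                  | c => rfl
                have hl2 : v''.length ≤ n := by simp at hl; omega
                have hp2 := ih v'' hl2 ⟨hA2, hst2⟩ he2
                exact PP_atom (Or.inr (Or.inr ⟨1, le_refl 1, Or.inl rfl⟩)) hp2

/-- **Proposition 7 (Troyka–Zhuang).** For `n ≥ 1` and a word `w` of length `n` over
`{a,b,c}`, we have `w ∈ W_n` if and only if `w` matches the regular expression
`a* c (c ∪ bc ∪ a⁺b ∪ a⁺c)* a⁺ c*`. -/
theorem stmt10 (n : ℕ) (hn : 1 ≤ n) (w : List ABC) (hw : w.length = n) :
    Wmem n w ↔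
      ∃ (i p q : ℕ) (L : List (List ABC)),
        (∀ u ∈ L, Atom u) ∧ 1 ≤ p ∧
        w = List.replicate i a ++ [c] ++ L.flatten
              ++ List.replicate p a ++ List.replicate q c := by
  constructor
  · rintro ⟨hlen, ⟨i, j, u, hform⟩, h1, h2, h3, h4⟩
    have hinf : u ++ [a] ++ List.replicate j c <:+: w :=
      ⟨List.replicate i a ++ [c], [], by rw [hform]; simp⟩
    have hA : Avoids (u ++ [a] ++ List.replicate j c) :=
      ⟨fun h => h1 (h.trans hinf), fun h => h2 (h.trans hinf),
      fun h => h3 (h.trans hinf), fun h => h4 (h.trans hinf)⟩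
    have hst : ∀ y t, u ++ [a] ++ List.replicate j c = b :: y :: t → y = c := by
      intro y t hvt
      have hw2 : w = List.replicate i a ++ [c] ++ (b :: y :: t) := by
        rw [hform, ← hvt]; simp [List.append_assoc]
      cases y with
      | a => exact absurd (⟨List.replicate i a, t, by rw [hw2]; simp⟩ : [c, b, a] <:+: w) h3
      | b => exact absurd (⟨List.replicate i a, t, by rw [hw2]; simp⟩ : [c, b, b] <:+: w) h4
      | c => rfl
    have hE : EndA (u ++ [a] ++ List.replicate j c) := ⟨u, j, rfl⟩
    obtain ⟨p, q, L, hL, hp, hveq⟩ :=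
      main_lemma (u ++ [a] ++ List.replicate j c).length _ le_rfl ⟨hA, hst⟩ hE
    refine ⟨i, p, q, L, hL, hp, ?_⟩
    rw [hform]
    simp only [List.append_assoc]
    rw [show u ++ ([a] ++ List.replicate j c) =
        L.flatten ++ (List.replicate p a ++ List.replicate q c) by
      simpa [List.append_assoc] using hveq]
  · rintro ⟨i, p, q, L, hL, hp, rfl⟩
    have hG := good_flatten L hL p q hp
    have hAw : Avoids (List.replicate i a ++
        (c :: (L.flatten ++ (List.replicate p a ++ List.replicate q c)))) :=
      (avoids_rep_a i (good_c hG).1)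
    have hwE : List.replicate i a ++ [c] ++ L.flatten
        ++ List.replicate p a ++ List.replicate q c
        = List.replicate i a ++
        (c :: (L.flatten ++ (List.replicate p a ++ List.replicate q c))) := by
      simp [List.append_assoc]
    refine ⟨hw, ⟨i, q, L.flatten ++ List.replicate (p - 1) a, ?_⟩, ?_, ?_, ?_, ?_⟩
    · have hrep : List.replicate p a = List.replicate (p - 1) a ++ [a] := by
        conv_lhs => rw [show p = (p - 1) + 1 by omega]
        rw [List.replicate_succ']
      rw [hrep]
      simp [List.append_assoc]
    · rw [hwE]; exact hAw.1
    · rw [hwE]; exact hAw.2.1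
    · rw [hwE]; exact hAw.2.2.1
    · rw [hwE]; exact hAw.2.2.2
end

section
/- For every k ≥ 1, the number of words of length k over the alphabet {a,b,c} matching the regular expression a* c (c ∪ bc ∪ a⁺b ∪ a⁺c)* is equal to f_{k−1} f_k. -/
open ABC

namespace Prop8

inductive St : Type
  | s0 | s1 | s2 | s3 | dead
  deriving DecidableEq

open St

def step : St → ABC → St
  | s0, .a => s0
  | s0, .c => s1
  | s0, .b => dead
  | s1, .c => s1
  | s1, .b => s2
  | s1, .a => s3
  | s2, .c => s1
  | s2, _ => dead
  | s3, .a => s3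
  | s3, _ => s1
  | dead, _ => dead

def run (s : St) (w : List ABC) : St := w.foldl step s

@[simp] lemma run_nil (s : St) : run s [] = s := rfl

@[simp] lemma run_cons (s : St) (x : ABC) (w : List ABC) :
    run s (x :: w) = run (step s x) w := rfl

lemma run_append (s : St) (u v : List ABC) :
    run s (u ++ v) = run (run s u) v := List.foldl_append ..

@[simp] lemma run_dead (w : List ABC) : run dead w = dead := by
  induction w with
  | nil => rfl
  | cons x w ih => simpa [step] using ih

lemma run_s0_rep (i : ℕ) : run s0 (List.replicate i a) = s0 := by
  induction i with
  | zero => rfl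
  | succ n ih => simpa [List.replicate_succ, step] using ih

lemma run_s3_rep (i : ℕ) : run s3 (List.replicate i a) = s3 := by
  induction i with
  | zero => rfl
  | succ n ih => simpa [List.replicate_succ, step] using ih

lemma run_s1_atom {u : List ABC} (h : Atom u) : run s1 u = s1 := by
  rcases h with h | h | ⟨i, hi, h | h⟩
  · simp [h, step]
  · simp [h, step]
  all_goals {
    obtain ⟨j, rfl⟩ := Nat.exists_eq_add_of_le hi
    subst h
    rw [List.replicate_add, List.replicate_one]
    simp [run_append, step, run_s3_rep] }

lemma run_s1_flatten {L : List (List ABC)} (h : ∀ u ∈ L, Atom u) :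
    run s1 L.flatten = s1 := by
  induction L with
  | nil => rfl
  | cons u L ih =>
    rw [List.flatten_cons, run_append, run_s1_atom (h u (by simp))]
    exact ih fun v hv => h v (by simp [hv])

/-- from state s3, accepted words decompose as a-run then b/c. -/
lemma runs3_decomp : ∀ w : List ABC, run s3 w = s1 →
    ∃ (j : ℕ) (x : ABC) (v : List ABC), (x = b ∨ x = c) ∧
      w = List.replicate j a ++ x :: v ∧ run s1 v = s1 := by
  intro w
  induction w with
  | nil => intro h; simp [run] at h
  | cons x w ih =>
    intro h
    cases x with
    | a =>
      obtain ⟨j, y, v, hy, hw, hv⟩ := ih (by simpa [step] using h)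
      exact ⟨j + 1, y, v, hy, by simp [List.replicate_succ, hw], hv⟩
    | b => exact ⟨0, b, w, Or.inl rfl, by simp, by simpa [step] using h⟩
    | c => exact ⟨0, c, w, Or.inr rfl, by simp, by simpa [step] using h⟩

/-- accepted words from s1 are flattenings of atom lists. -/
lemma runs1_decomp : ∀ (n : ℕ) (w : List ABC), w.length ≤ n → run s1 w = s1 →
    ∃ L : List (List ABC), (∀ u ∈ L, Atom u) ∧ w = L.flatten := by
  intro n
  induction n with
  | zero =>
    intro w hw _
    rw [Nat.le_zero, List.length_eq_zero_iff] at hw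
    exact ⟨[], by simp, by simp [hw]⟩
  | succ n ih =>
    intro w hw h
    match w with
    | [] => exact ⟨[], by simp, by simp⟩
    | .c :: v =>
      obtain ⟨L, hL, rfl⟩ := ih v (by simp at hw; omega) (by simpa [step] using h)
      refine ⟨[c] :: L, ?_, by simp⟩
      intro u hu
      rcases List.mem_cons.mp hu with rfl | hu
      exacts [Or.inl rfl, hL u hu]
    | .b :: v =>
      have h2 : run s2 v = s1 := by simpa [step] using h
      match v with
      | [] => simp [run] at h2
      | .a :: v' => simp [step] at h2
      | .b :: v' => simp [step] at h2
      | .c :: v' =>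
        have h1 : run s1 v' = s1 := by simpa [step] using h2
        obtain ⟨L, hL, rfl⟩ := ih v' (by simp at hw ⊢; omega) h1
        refine ⟨[b, c] :: L, ?_, by simp⟩
        intro u hu
        rcases List.mem_cons.mp hu with rfl | hu
        exacts [Or.inr (Or.inl rfl), hL u hu]
    | .a :: v =>
      have h3 : run s3 v = s1 := by simpa [step] using h
      obtain ⟨j, x, v', hx, rfl, hv'⟩ := runs3_decomp v h3
      obtain ⟨L, hL, rfl⟩ := ih v' (by simp at hw ⊢; omega) hv'
      refine ⟨(List.replicate (j+1) a ++ [x]) :: L, ?_, ?_⟩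
      · intro u hu
        rcases List.mem_cons.mp hu with rfl | hu
        · exact Or.inr (Or.inr ⟨j + 1, by omega, by rcases hx with rfl | rfl <;> simp⟩)
        · exact hL u hu
      · simp [List.replicate_succ]
    
lemma runs0_decomp : ∀ w : List ABC, run s0 w = s1 →
    ∃ (i : ℕ) (v : List ABC), w = List.replicate i a ++ [c] ++ v ∧ run s1 v = s1 := by
  intro w
  induction w with
  | nil => intro h; simp [run] at h
  | cons x w ih =>
    intro h
    cases x with
    | a =>
      obtain ⟨i, v, hw, hv⟩ := ih (by simpa [step] using h)
      exact ⟨i + 1, v, by simp [List.replicate_succ, hw], hv⟩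
    | b => simp [step] at h
    | c => exact ⟨0, w, by simp, by simpa [step] using h⟩

/-- The key characterization. -/
lemma lang_iff (w : List ABC) :
    (∃ (i : ℕ) (L : List (List ABC)), (∀ u ∈ L, Atom u) ∧
        w = List.replicate i a ++ [c] ++ L.flatten) ↔ run s0 w = s1 := by
  constructor
  · rintro ⟨i, L, hL, rfl⟩
    rw [run_append, run_append, run_s0_rep]
    have h1 : run s0 [c] = s1 := rfl
    rw [h1]
    exact run_s1_flatten hL
  · intro h
    obtain ⟨i, v, rfl, hv⟩ := runs0_decomp w h
    obtain ⟨L, hL, rfl⟩ := runs1_decomp v.length v le_rfl hv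
    exact ⟨i, L, hL, rfl⟩

end Prop8
namespace Prop8
open St

def cnt (s : St) : ℕ → ℕ
  | 0 => if s = s1 then 1 else 0
  | n + 1 => cnt (step s a) n + cnt (step s b) n + cnt (step s c) n

lemma cnt_closed (n : ℕ) :
    cnt s0 n = Nat.fib n * Nat.fib (n + 1) ∧
    cnt s1 n = Nat.fib (n + 1) * Nat.fib (n + 1) ∧
    cnt s2 n = Nat.fib n * Nat.fib n ∧
    cnt s3 n = 2 * (Nat.fib n * Nat.fib (n + 1)) ∧
    cnt dead n = 0 := by
  induction n with
  | zero => simp [cnt]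
  | succ n ih =>
    obtain ⟨h0, h1, h2, h3, hd⟩ := ih
    have hf : Nat.fib (n + 1 + 1) = Nat.fib n + Nat.fib (n + 1) := by
      rw [Nat.fib_add_two]
    refine ⟨?_, ?_, ?_, ?_, ?_⟩ <;>
      simp only [cnt, step, h0, h1, h2, h3, hd] <;>
      first
        | (rw [hf]; ring)
        | ring
        | rfl

def F (s : St) : ℕ → Finset (List ABC)
  | 0 => if s = s1 then {[]} else ∅
  | n + 1 =>
      ((F (step s a) n).image (a :: ·)) ∪ ((F (step s b) n).image (b :: ·)) ∪
        ((F (step s c) n).image (c :: ·))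

lemma mem_F : ∀ (n : ℕ) (s : St) (w : List ABC),
    w ∈ F s n ↔ w.length = n ∧ run s w = s1 := by
  intro n
  induction n with
  | zero =>
    intro s w
    simp only [F]
    split_ifs with hs <;> subst_eqs <;> simp [List.length_eq_zero_iff] <;>
      rintro rfl <;> simp [*]
  | succ n ih =>
    intro s w
    match w with
    | [] => simp [F]
    | x :: v =>
      cases x <;>
        simp [F, ih, List.cons.injEq] <;> aesop

lemma card_F : ∀ (n : ℕ) (s : St), (F s n).card = cnt s n := by
  intro n
  induction n with
  | zero => intro s; simp [F, cnt]; split_ifs <;> simp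
  | succ n ih =>
    intro s
    have hinj : ∀ x : ABC, Function.Injective (x :: · : List ABC → List ABC) := by
      intro x u v h; simpa using h
    have d1 : Disjoint ((F (step s a) n).image (a :: ·)) ((F (step s b) n).image (b :: ·)) := by
      simp only [Finset.disjoint_left, Finset.mem_image]
      rintro w ⟨u, -, rfl⟩ ⟨v, -, h⟩
      simp at h
    have d2 : Disjoint (((F (step s a) n).image (a :: ·)) ∪ ((F (step s b) n).image (b :: ·)))
        ((F (step s c) n).image (c :: ·)) := by
      simp only [Finset.disjoint_left, Finset.mem_union, Finset.mem_image]
      rintro w (⟨u, -, rfl⟩ | ⟨u, -, rfl⟩) ⟨v, -, h⟩ <;> simp at h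
    rw [F, Finset.card_union_of_disjoint d2, Finset.card_union_of_disjoint d1,
      Finset.card_image_of_injective _ (hinj a), Finset.card_image_of_injective _ (hinj b),
      Finset.card_image_of_injective _ (hinj c), ih, ih, ih, cnt]

end Prop8
/-- **Proposition 8 (Troyka–Zhuang).** For every `k ≥ 1`, the number of words of length `k`
over `{a,b,c}` matching the regular expression `a* c (c ∪ bc ∪ a⁺b ∪ a⁺c)*` equals
`f_{k-1} f_k`, where the Fibonacci numbers are indexed so that `f_0 = f_1 = 1`
(so `f_j = Nat.fib (j+1)`). -/
theorem stmt11 (k : ℕ) (hk : 1 ≤ k) :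
    Nat.card {w : List ABC // w.length = k ∧
        ∃ (i : ℕ) (L : List (List ABC)), (∀ u ∈ L, Atom u) ∧
          w = List.replicate i a ++ [c] ++ L.flatten}
      = Nat.fib k * Nat.fib (k + 1) := by
  have e : Nat.card {w : List ABC // w.length = k ∧
        ∃ (i : ℕ) (L : List (List ABC)), (∀ u ∈ L, Atom u) ∧
          w = List.replicate i a ++ [c] ++ L.flatten}
      = Nat.card (Prop8.F Prop8.St.s0 k) := by
    apply Nat.card_congr
    exact Equiv.subtypeEquivRight fun w => by
      rw [Prop8.mem_F]
      exact and_congr_right fun _ => Prop8.lang_iff w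
  rw [e, Nat.card_eq_finsetCard, Prop8.card_F]
  exact (Prop8.cnt_closed k).1
end

section
/- Let v be a word over the alphabet {a,b,c} that does not end with the letter a. If the word cva (the concatenation of c, v, and a) avoids the words bba, bbb, cba, and cbb as blocks of consecutive letters, then v matches the regular expression (c ∪ bc ∪ a⁺b ∪ a⁺c)*. -/
open ABC

def AvoidsXbY (w : List ABC) : Prop :=
  ∀ x y : ABC, x ≠ a → y ≠ c → ¬ [x, b, y] <:+: w

theorem AvoidsXbY.mono {s w : List ABC} (h : AvoidsXbY w) (hs : s <:+: w) : AvoidsXbY s :=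
  fun x y hx hy hxy => h x y hx hy (hxy.trans hs)

theorem avoidsXbY_iff (w : List ABC) :
    AvoidsXbY w ↔ ¬ [b, b, a] <:+: w ∧ ¬ [b, b, b] <:+: w ∧ ¬ [c, b, a] <:+: w ∧
      ¬ [c, b, b] <:+: w := by
  constructor
  · intro h
    exact ⟨h b a (by decide) (by decide), h b b (by decide) (by decide),
      h c a (by decide) (by decide), h c b (by decide) (by decide)⟩
  · rintro ⟨h1, h2, h3, h4⟩ x y hx hy
    cases x <;> cases y <;> trivial

open Computability

def atoms : Language ABC := {u | Atom u}

theorem replicate_append_c_mem_atoms (i : ℕ) : List.replicate i a ++ [c] ∈ atoms := by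
  rcases i.eq_zero_or_pos with rfl | hi
  · exact Or.inl rfl
  · exact Or.inr (Or.inr ⟨i, hi, Or.inr rfl⟩)

theorem replicate_succ_append_b_mem_atoms (i : ℕ) :
    List.replicate (i + 1) a ++ [b] ∈ atoms :=
  Or.inr (Or.inr ⟨i + 1, i.succ_pos, Or.inl rfl⟩)

theorem bc_mem_atoms : [b, c] ∈ atoms := Or.inr (Or.inl rfl)

theorem Language.append_mem_kstar {α : Type*} {l : Language α} {u v : List α}
    (hu : u ∈ l) (hv : v ∈ l∗) : u ++ v ∈ l∗ := by
  obtain ⟨L, rfl, hL⟩ := Language.mem_kstar.mp hv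
  exact Language.mem_kstar.mpr ⟨u :: L, rfl, by simpa [hu] using hL⟩

theorem getLast?_ne_of_append {α : Type*} {x : α} {u w : List α}
    (h : (u ++ w).getLast? ≠ some x) : w.getLast? ≠ some x := by
  intro hw
  simp [List.getLast?_append, hw] at h

-- `p` is the letter read last, and `aⁱ` the block of `a`s read since then.
theorem replicate_append_mem_kstar_atoms {p : ABC} (hp : p ≠ a) :
    ∀ (i : ℕ) (v : List ABC), (List.replicate i a ++ v).getLast? ≠ some a →
      AvoidsXbY (p :: (List.replicate i a ++ v) ++ [a]) → List.replicate i a ++ v ∈ atoms∗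
  | 0, [], _, _ => Language.nil_mem_kstar _
  | i + 1, [], hv, _ => absurd (by simp [List.replicate_succ']) hv
  | i, a :: v, hv, h => by
    have e : List.replicate i a ++ a :: v = List.replicate (i + 1) a ++ v := by
      simp [List.replicate_succ']
    rw [e] at hv h ⊢
    exact replicate_append_mem_kstar_atoms hp (i + 1) v hv h
  | i, c :: v, hv, h => by
    rw [List.append_cons] at hv h ⊢
    refine Language.append_mem_kstar (replicate_append_c_mem_atoms i)
      (replicate_append_mem_kstar_atoms (p := c) (by decide) 0 v (getLast?_ne_of_append hv)
        (h.mono ?_))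
    exact ⟨p :: List.replicate i a, [], by simp⟩
  | i + 1, b :: v, hv, h => by
    rw [List.append_cons] at hv h ⊢
    refine Language.append_mem_kstar (replicate_succ_append_b_mem_atoms i)
      (replicate_append_mem_kstar_atoms (p := b) (by decide) 0 v (getLast?_ne_of_append hv)
        (h.mono ?_))
    exact ⟨p :: List.replicate (i + 1) a, [], by simp⟩
  | 0, [b], _, h => absurd ⟨[], [], rfl⟩ (h p a hp (by decide))
  | 0, b :: a :: _, _, h => absurd ⟨[], _, rfl⟩ (h p a hp (by decide))
  | 0, b :: b :: _, _, h => absurd ⟨[], _, rfl⟩ (h p b hp (by decide))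
  | 0, b :: c :: v, hv, h =>
    Language.append_mem_kstar (u := [b, c]) bc_mem_atoms
      (replicate_append_mem_kstar_atoms (p := c) (by decide) 0 v
        (getLast?_ne_of_append (u := [b, c]) hv) (h.mono ⟨[p, b], [], by simp⟩))

/-- **Lemma 11 (Troyka–Zhuang).** Let `v` be a word over `{a,b,c}` not ending with `a`.
If `cva` avoids the subwords `bba`, `bbb`, `cba`, `cbb`, then `v` matches the regular
expression `(c ∪ bc ∪ a⁺b ∪ a⁺c)*`. -/
theorem stmt14 (v : List ABC) (hv : v.getLast? ≠ some a)
    (h1 : ¬ [b, b, a] <:+: ([c] ++ v ++ [a]))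
    (h2 : ¬ [b, b, b] <:+: ([c] ++ v ++ [a]))
    (h3 : ¬ [c, b, a] <:+: ([c] ++ v ++ [a]))
    (h4 : ¬ [c, b, b] <:+: ([c] ++ v ++ [a])) :
    ∃ L : List (List ABC), (∀ u ∈ L, Atom u) ∧ v = L.flatten := by
  have hcva : AvoidsXbY (c :: v ++ [a]) := (avoidsXbY_iff _).mpr ⟨h1, h2, h3, h4⟩
  obtain ⟨L, hvL, hL⟩ :=
    Language.mem_kstar.mp (replicate_append_mem_kstar_atoms (by decide) 0 v hv hcva)
  exact ⟨L, hL, hvL⟩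
end

section
/- For every n ≥ 1, |W_n| = ∑_{k=1}^{n−1} ∑_{j=0}^{n−k−1} f_{k−1} f_k. -/
open ABC

/-!
Write a word of `W_n` as `a^i (c u a) c^j`. No forbidden pattern starts with `a` or ends with
`c`, so the word avoids the patterns exactly when its core `c u a` does. Splitting on the first
letters of `u`, the numbers `N_m` of admissible cores with `|u| = m` and `M_m` of words `u` of
length `m` with `u a` admissible satisfy `M_{m+1} = M_m + 2 N_m` and
`N_{m+2} = M_{m+1} + N_{m+1} + N_m`, whence `N_m = F_{m+1} F_{m+2}` (Mathlib's `Nat.fib`).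
For `k = |u| + 1` the exponent `i` takes `n - k` values and then `j` is determined by `n`.
-/

theorem List.replicate_append_cons_inj {α : Type*} {x y : α} (hxy : x ≠ y) {i j : ℕ}
    {v w : List α} :
    replicate i x ++ y :: v = replicate j x ++ y :: w ↔ i = j ∧ v = w := by
  induction i generalizing j with
  | zero => cases j <;> simp [replicate_succ, hxy.symm]
  | succ i ih => cases j <;> simp [replicate_succ, hxy, ih]

theorem List.append_cons_replicate_inj {α : Type*} {x y : α} (hxy : x ≠ y) {i j : ℕ}
    {v w : List α} :
    v ++ y :: replicate i x = w ++ y :: replicate j x ↔ v = w ∧ i = j := by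
  rw [← reverse_inj]
  simpa [and_comm] using replicate_append_cons_inj hxy (v := v.reverse) (w := w.reverse)

instance : Fintype ABC := ⟨{a, b, c}, fun x => by cases x <;> simp⟩

theorem ABC.sum_univ {M : Type*} [AddCommMonoid M] (g : ABC → M) :
    ∑ x, g x = g a + g b + g c := by
  simp [Finset.univ, Fintype.elems, add_assoc]

def AvoidsPatterns (v : List ABC) : Prop :=
  ¬ [b, b, a] <:+: v ∧ ¬ [b, b, b] <:+: v ∧ ¬ [c, b, a] <:+: v ∧ ¬ [c, b, b] <:+: v

instance : DecidablePred AvoidsPatterns := fun v => by unfold AvoidsPatterns; infer_instance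

namespace AvoidsPatterns

theorem cons_a {v : List ABC} : AvoidsPatterns (a :: v) ↔ AvoidsPatterns v := by
  simp [AvoidsPatterns, List.infix_cons_iff]

theorem cons_c {v : List ABC} :
    AvoidsPatterns (c :: v) ↔ AvoidsPatterns v ∧ ¬ [b, a] <+: v ∧ ¬ [b, b] <+: v := by
  simp [AvoidsPatterns, List.infix_cons_iff]
  tauto

theorem cons_b {v : List ABC} : AvoidsPatterns (b :: v) ↔ AvoidsPatterns (c :: v) := by
  simp [AvoidsPatterns, List.infix_cons_iff]
  tauto

theorem concat_c {v : List ABC} : AvoidsPatterns (v ++ [c]) ↔ AvoidsPatterns v := by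
  simp [AvoidsPatterns, List.infix_concat_iff, List.suffix_concat_iff, List.cons_eq_append_iff]

theorem replicate_a_append {v : List ABC} (i : ℕ) :
    AvoidsPatterns (List.replicate i a ++ v) ↔ AvoidsPatterns v := by
  induction i with
  | zero => rfl
  | succ i ih => rwa [List.replicate_succ, List.cons_append, cons_a]

theorem append_replicate_c {v : List ABC} (j : ℕ) :
    AvoidsPatterns (v ++ List.replicate j c) ↔ AvoidsPatterns v := by
  induction j with
  | zero => simp
  | succ j ih => rwa [List.replicate_succ', ← List.append_assoc, concat_c]

end AvoidsPatterns

section Words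

variable (α : Type*) [Fintype α] [DecidableEq α]

def wordsOfLength : ℕ → Finset (List α)
  | 0 => {[]}
  | m + 1 => (Finset.univ ×ˢ wordsOfLength m).image fun p => p.1 :: p.2

variable {α}

theorem mem_wordsOfLength {m : ℕ} {w : List α} : w ∈ wordsOfLength α m ↔ w.length = m := by
  induction m generalizing w with
  | zero => simp [wordsOfLength]
  | succ m ih => cases w <;> simp [wordsOfLength, ih]

theorem card_filter_wordsOfLength_succ (P : List α → Prop) [DecidablePred P] (m : ℕ) :
    ((wordsOfLength α (m + 1)).filter P).card
      = ∑ x, ((wordsOfLength α m).filter fun u => P (x :: u)).card := by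
  have hcons : Function.Injective fun p : α × List α => p.1 :: p.2 := by
    rintro ⟨x, u⟩ ⟨y, v⟩ h
    simp_all
  rw [wordsOfLength, Finset.filter_image, Finset.card_image_of_injective _ hcons,
    Finset.card_filter, Finset.sum_product]
  simp only [Finset.card_filter]

end Words

/-- The cores `c u a` of the words of `W_n` are counted by `fillings [c]`. -/
def fillings (p : List ABC) (m : ℕ) : Finset (List ABC) :=
  (wordsOfLength ABC m).filter fun u => AvoidsPatterns (p ++ (u ++ [a]))

theorem mem_fillings {p : List ABC} {m : ℕ} {u : List ABC} :
    u ∈ fillings p m ↔ u.length = m ∧ AvoidsPatterns (p ++ (u ++ [a])) := by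
  simp [fillings, mem_wordsOfLength]

theorem card_fillings_succ (p : List ABC) (m : ℕ) :
    (fillings p (m + 1)).card
      = (fillings (p ++ [a]) m).card + (fillings (p ++ [b]) m).card
        + (fillings (p ++ [c]) m).card := by
  simp [fillings, card_filter_wordsOfLength_succ, ABC.sum_univ]

theorem card_fillings_congr {p q : List ABC}
    (h : ∀ v, AvoidsPatterns (p ++ v) ↔ AvoidsPatterns (q ++ v)) (m : ℕ) :
    (fillings p m).card = (fillings q m).card := by
  simp only [fillings, h]

theorem fillings_eq_empty {p : List ABC} (h : ∀ v, ¬ AvoidsPatterns (p ++ v)) (m : ℕ) :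
    fillings p m = ∅ :=
  Finset.filter_false_of_mem fun _ _ => h _

theorem card_fillings_nil_succ (m : ℕ) :
    (fillings [] (m + 1)).card = (fillings [] m).card + 2 * (fillings [c] m).card := by
  rw [card_fillings_succ]
  simp only [List.nil_append]
  rw [card_fillings_congr (p := [a]) (q := []) fun _ => AvoidsPatterns.cons_a,
    card_fillings_congr (p := [b]) (q := [c]) fun _ => AvoidsPatterns.cons_b]
  ring

theorem card_fillings_c_succ_succ (m : ℕ) :
    (fillings [c] (m + 2)).card
      = (fillings [] (m + 1)).card + (fillings [c] (m + 1)).card + (fillings [c] m).card := by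
  have hca (v : List ABC) : AvoidsPatterns (c :: a :: v) ↔ AvoidsPatterns v := by
    simp [AvoidsPatterns.cons_c, AvoidsPatterns.cons_a]
  have hcc (v : List ABC) : AvoidsPatterns (c :: c :: v) ↔ AvoidsPatterns (c :: v) := by
    rw [AvoidsPatterns.cons_c (v := c :: v)]
    simp
  have hcbc (v : List ABC) : AvoidsPatterns (c :: b :: c :: v) ↔ AvoidsPatterns (c :: v) := by
    rw [AvoidsPatterns.cons_c (v := b :: c :: v), AvoidsPatterns.cons_b, hcc]
    simp
  have hcba (v : List ABC) : ¬ AvoidsPatterns (c :: b :: a :: v) := by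
    simp [AvoidsPatterns.cons_c]
  have hcbb (v : List ABC) : ¬ AvoidsPatterns (c :: b :: b :: v) := by
    simp [AvoidsPatterns.cons_c]
  rw [card_fillings_succ, card_fillings_succ ([c] ++ [b]) m]
  simp only [List.cons_append, List.nil_append]
  rw [card_fillings_congr (p := [c, a]) (q := []) hca,
    card_fillings_congr (p := [c, c]) (q := [c]) hcc,
    card_fillings_congr (p := [c, b, c]) (q := [c]) hcbc,
    fillings_eq_empty (p := [c, b, a]) hcba, fillings_eq_empty (p := [c, b, b]) hcbb]
  simp only [Finset.card_empty, zero_add]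
  ring

theorem card_fillings_c_and_nil (m : ℕ) :
    (fillings [c] m).card = Nat.fib (m + 1) * Nat.fib (m + 2) ∧
      (fillings [] m).card = Nat.fib (m + 1) * Nat.fib (m + 2) + Nat.fib m ^ 2 := by
  induction m using Nat.twoStepInduction with
  | zero => decide
  | one => decide
  | more m ih₀ ih₁ =>
    have h₃ : Nat.fib (m + 3) = Nat.fib (m + 1) + Nat.fib (m + 2) := Nat.fib_add_two
    have h₄ : Nat.fib (m + 4) = Nat.fib (m + 2) + Nat.fib (m + 3) := Nat.fib_add_two
    rw [card_fillings_c_succ_succ, card_fillings_nil_succ (m + 1), ih₀.1, ih₁.1, ih₁.2]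
    constructor <;> rw [h₄, h₃] <;> ring

def sandwich (i : ℕ) (u : List ABC) (j : ℕ) : List ABC :=
  List.replicate i a ++ c :: (u ++ a :: List.replicate j c)

theorem sandwich_inj {i i' j j' : ℕ} {u u' : List ABC} :
    sandwich i u j = sandwich i' u' j' ↔ i = i' ∧ u = u' ∧ j = j' := by
  rw [sandwich, sandwich, List.replicate_append_cons_inj (by decide),
    List.append_cons_replicate_inj (by decide)]

theorem length_sandwich (i : ℕ) (u : List ABC) (j : ℕ) :
    (sandwich i u j).length = i + u.length + j + 2 := by
  simp [sandwich]
  omega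

theorem avoidsPatterns_sandwich (i : ℕ) (u : List ABC) (j : ℕ) :
    AvoidsPatterns (sandwich i u j) ↔ AvoidsPatterns (c :: (u ++ [a])) := by
  have hcore : c :: (u ++ a :: List.replicate j c) = c :: (u ++ [a]) ++ List.replicate j c := by
    simp
  rw [sandwich, AvoidsPatterns.replicate_a_append, hcore, AvoidsPatterns.append_replicate_c]

theorem wmem_iff_exists_sandwich {n : ℕ} {w : List ABC} :
    Wmem n w ↔ ∃ i u j, w = sandwich i u j ∧ i + u.length + j + 2 = n ∧
      AvoidsPatterns (c :: (u ++ [a])) := by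
  have hform (i j : ℕ) (u : List ABC) :
      List.replicate i a ++ [c] ++ u ++ [a] ++ List.replicate j c = sandwich i u j := by
    simp [sandwich]
  constructor
  · rintro ⟨rfl, ⟨i, j, u, rfl⟩, havoid⟩
    rw [hform] at havoid ⊢
    exact ⟨i, u, j, rfl, (length_sandwich i u j).symm,
      (avoidsPatterns_sandwich i u j).1 havoid⟩
  · rintro ⟨i, u, j, rfl, rfl, havoid⟩
    exact ⟨length_sandwich i u j, ⟨i, j, u, (hform i j u).symm⟩,
      (avoidsPatterns_sandwich i u j).2 havoid⟩

/-- The triples `⟨k, i, u⟩` index the terms of the double sum: `|u| = k - 1` and `i < n - k`. -/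
def decompositions (n : ℕ) : Finset ((_ : ℕ) × ℕ × List ABC) :=
  (Finset.Icc 1 (n - 1)).sigma fun k => Finset.range (n - k) ×ˢ fillings [c] (k - 1)

/-- The exponent `j` of `a^i c u a c^j` is determined by the length `n`. -/
def sandwichOf (n : ℕ) (p : (_ : ℕ) × ℕ × List ABC) : List ABC :=
  sandwich p.2.1 p.2.2 (n - p.1 - 1 - p.2.1)

theorem wmem_iff_mem_image {n : ℕ} {w : List ABC} :
    Wmem n w ↔ w ∈ (decompositions n).image (sandwichOf n) := by
  simp only [wmem_iff_exists_sandwich, decompositions, Finset.mem_image, Finset.mem_sigma,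
    Finset.mem_Icc, Finset.mem_product, Finset.mem_range, mem_fillings, Sigma.exists,
    Prod.exists, sandwichOf]
  constructor
  · rintro ⟨i, u, j, rfl, rfl, havoid⟩
    refine ⟨u.length + 1, i, u, ⟨⟨by omega, by omega⟩, by omega, by simp, havoid⟩, ?_⟩
    congr 1
    omega
  · rintro ⟨k, i, u, ⟨⟨hk, hkn⟩, hi, hu, havoid⟩, rfl⟩
    exact ⟨i, u, _, rfl, by omega, havoid⟩

theorem injOn_sandwichOf (n : ℕ) : Set.InjOn (sandwichOf n) (decompositions n) := by
  rintro ⟨k, i, u⟩ hp ⟨k', i', u'⟩ hp' h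
  obtain ⟨rfl, rfl, -⟩ := sandwich_inj.1 h
  simp only [decompositions, Finset.coe_sigma, Set.mem_sigma_iff, Finset.coe_Icc, Set.mem_Icc,
    Finset.coe_product, Set.mem_prod, Finset.mem_coe, mem_fillings] at hp hp'
  obtain rfl : k = k' := by omega
  rfl

theorem card_decompositions (n : ℕ) :
    (decompositions n).card
      = ∑ k ∈ Finset.Icc 1 (n - 1), (n - k) * (Nat.fib k * Nat.fib (k + 1)) := by
  rw [decompositions, Finset.card_sigma]
  refine Finset.sum_congr rfl fun k hk => ?_
  obtain ⟨m, rfl⟩ := Nat.exists_eq_add_of_le' (Finset.mem_Icc.1 hk).1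
  rw [Finset.card_product, Finset.card_range, Nat.add_sub_cancel, (card_fillings_c_and_nil m).1]

theorem stmt15_general (n : ℕ) :
    Nat.card {w : List ABC // Wmem n w}
      = ∑ k ∈ Finset.Icc 1 (n - 1), ∑ _j ∈ Finset.range (n - k),
          Nat.fib k * Nat.fib (k + 1) := by
  calc Nat.card {w : List ABC // Wmem n w}
      = ((decompositions n).image (sandwichOf n)).card := by
        rw [← Nat.card_eq_finsetCard]
        exact Nat.card_congr (Equiv.subtypeEquivRight fun _ => wmem_iff_mem_image)
    _ = (decompositions n).card := Finset.card_image_of_injOn (injOn_sandwichOf n)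
    _ = _ := by simp [card_decompositions]

/-- For every `n ≥ 1`, `|W_n| = ∑_{k=1}^{n-1} ∑_{j=0}^{n-k-1} f_{k-1} f_k`, where the
Fibonacci numbers are indexed so that `f_0 = f_1 = 1` (so `f_j = Nat.fib (j+1)`). -/
theorem stmt15 (n : ℕ) (hn : 1 ≤ n) :
    Nat.card {w : List ABC // Wmem n w}
      = ∑ k ∈ Finset.Icc 1 (n - 1), ∑ _j ∈ Finset.range (n - k),
          Nat.fib k * Nat.fib (k + 1) :=
  stmt15_general n
end
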